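/- arXiv:1107.4402 — 8 statements merged into one kernel-verified Lean document; each statement's English description precedes it below -/
import Mathlib

section
/- Let (L, ν) be a finite measure space and let Ψ : ℝ → ℝ be a nonnegative convex function. Suppose that for ν-almost every l ∈ L we are given a finite nonempty set S(l) ⊂ ℝ and a real number h(l) with min S(l) ≤ h(l) ≤ max S(l), that h is measurable and ν-integrable with ∫_L h dν = 0, and that l ↦ Σ_{r ∈ S(l)} Ψ(r) is measurable. Then ∫_L (Σ_{r ∈ S(l)} Ψ(r)) dν(l) ≥ Ψ(0) · ν(L). -/
open MeasureTheory Filter Set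

/-! Convexity gives a supporting line `Ψ 0 + c x ≤ Ψ x`. Integrating it along `h`, whose integral
vanishes, bounds `Ψ 0 · ν L` by `∫ Ψ ∘ h`, and pointwise `Ψ (h l)` is at most the larger of the
values of `Ψ` at the extreme points of `S l`, hence at most `∑ r ∈ S l, Ψ r` since `Ψ ≥ 0`. -/

theorem ConvexOn.add_rightDeriv_mul_sub_le {S : Set ℝ} {f : ℝ → ℝ} (hf : ConvexOn ℝ S f)
    {x y : ℝ} (hx : x ∈ interior S) (hy : y ∈ S) :
    f x + derivWithin f (Ioi x) x * (y - x) ≤ f y := by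
  rcases lt_trichotomy x y with hxy | rfl | hyx
  · have := hf.rightDeriv_le_slope_of_mem_interior hx hy hxy
    rw [slope_def_field, le_div_iff₀ (sub_pos.2 hxy)] at this
    linarith
  · simp
  · have := (hf.slope_le_leftDeriv_of_mem_interior hy hx hyx).trans
      (hf.leftDeriv_le_rightDeriv_of_mem_interior hx)
    rw [slope_def_field, div_le_iff₀ (sub_pos.2 hyx)] at this
    linarith

theorem ConvexOn.le_sum_of_mem_Icc_min'_max' {S : Set ℝ} {f : ℝ → ℝ} (hf : ConvexOn ℝ S f)
    {s : Finset ℝ} (hs : s.Nonempty) (hsS : ↑s ⊆ S) (hf₀ : ∀ r ∈ s, 0 ≤ f r) {x : ℝ}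
    (hx : x ∈ Icc (s.min' hs) (s.max' hs)) :
    f x ≤ ∑ r ∈ s, f r := by
  rw [← segment_eq_Icc (s.min'_le_max' hs)] at hx
  calc f x ≤ max (f (s.min' hs)) (f (s.max' hs)) :=
        hf.le_on_segment (hsS (s.min'_mem hs)) (hsS (s.max'_mem hs)) hx
    _ ≤ ∑ r ∈ s, f r :=
        max_le (s.single_le_sum hf₀ (s.min'_mem hs)) (s.single_le_sum hf₀ (s.max'_mem hs))

theorem MeasureTheory.ofReal_integral_le_lintegral_ofReal {α : Type*} [MeasurableSpace α]
    {μ : Measure α} {f : α → ℝ} (hf : Integrable f μ) :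
    ENNReal.ofReal (∫ a, f a ∂μ) ≤ ∫⁻ a, ENNReal.ofReal (f a) ∂μ := by
  rw [integral_eq_lintegral_pos_part_sub_lintegral_neg_part hf]
  exact ENNReal.ofReal_le_of_le_toReal (sub_le_self _ ENNReal.toReal_nonneg)

/-- Jensen's inequality, without any integrability assumption on `Ψ ∘ h`. -/
theorem ConvexOn.ofReal_map_average_mul_le_lintegral {α : Type*} [MeasurableSpace α]
    {μ : Measure α} [IsFiniteMeasure μ] {Ψ : ℝ → ℝ} (hΨ : ConvexOn ℝ univ Ψ) {h : α → ℝ}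
    (hh : Integrable h μ) :
    ENNReal.ofReal (Ψ (⨍ a, h a ∂μ)) * μ univ ≤ ∫⁻ a, ENNReal.ofReal (Ψ (h a)) ∂μ := by
  set m := ⨍ a, h a ∂μ
  set c := derivWithin Ψ (Ioi m) m
  have hdev : Integrable (fun a => c * (h a - m)) μ :=
    (hh.sub (integrable_const m)).const_mul c
  have hline_integral : ∫ a, Ψ m + c * (h a - m) ∂μ = Ψ m * μ.real univ := by
    rw [integral_add (integrable_const _) hdev, integral_const_mul, integral_sub_average,
      integral_const, smul_eq_mul, mul_zero, add_zero, mul_comm]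
  calc ENNReal.ofReal (Ψ m) * μ univ = ENNReal.ofReal (Ψ m * μ.real univ) := by
        rw [ENNReal.ofReal_mul' measureReal_nonneg, measureReal_def,
          ENNReal.ofReal_toReal (measure_ne_top μ _)]
    _ = ENNReal.ofReal (∫ a, Ψ m + c * (h a - m) ∂μ) := by rw [hline_integral]
    _ ≤ ∫⁻ a, ENNReal.ofReal (Ψ m + c * (h a - m)) ∂μ :=
        ofReal_integral_le_lintegral_ofReal ((integrable_const _).add hdev)
    _ ≤ ∫⁻ a, ENNReal.ofReal (Ψ (h a)) ∂μ := lintegral_mono fun a => ENNReal.ofReal_le_ofReal <|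
        hΨ.add_rightDeriv_mul_sub_le (by simp) (mem_univ _)

theorem stmt_0_general {L : Type*} [MeasurableSpace L] (ν : Measure L) [IsFiniteMeasure ν]
    (Ψ : ℝ → ℝ) (hΨnn : ∀ x : ℝ, 0 ≤ Ψ x) (hΨconv : ConvexOn ℝ Set.univ Ψ)
    (S : L → Finset ℝ) (h : L → ℝ)
    (hSh : ∀ᵐ l ∂ν, ∃ hne : (S l).Nonempty,
      (S l).min' hne ≤ h l ∧ h l ≤ (S l).max' hne)
    (hint : Integrable h ν)
    (hzero : ∫ l, h l ∂ν = 0) :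
    ENNReal.ofReal (Ψ 0) * ν Set.univ ≤
      ∫⁻ l, ENNReal.ofReal (∑ r ∈ S l, Ψ r) ∂ν := by
  have havg : ⨍ l, h l ∂ν = 0 := by rw [average_eq, hzero, smul_zero]
  calc ENNReal.ofReal (Ψ 0) * ν univ ≤ ∫⁻ l, ENNReal.ofReal (Ψ (h l)) ∂ν :=
        havg ▸ hΨconv.ofReal_map_average_mul_le_lintegral hint
    _ ≤ ∫⁻ l, ENNReal.ofReal (∑ r ∈ S l, Ψ r) ∂ν := by
        refine lintegral_mono_ae ?_
        filter_upwards [hSh] with l ⟨hne, hmin, hmax⟩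
        exact ENNReal.ofReal_le_ofReal <| hΨconv.le_sum_of_mem_Icc_min'_max' hne
          (subset_univ _) (fun r _ => hΨnn r) ⟨hmin, hmax⟩

/-- Let `(L, ν)` be a finite measure space and `Ψ : ℝ → ℝ` a nonnegative
convex function.  Suppose that for `ν`-a.e. `l` we are given a finite nonempty set
`S l ⊆ ℝ` and a real `h l` with `min (S l) ≤ h l ≤ max (S l)`, that `h` is measurable and
integrable with `∫ h dν = 0`, and that `l ↦ ∑ r ∈ S l, Ψ r` is measurable.  Then
`∫ (∑ r ∈ S l, Ψ r) dν ≥ Ψ 0 · ν L`. -/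
theorem stmt_0 {L : Type*} [MeasurableSpace L] (ν : Measure L) [IsFiniteMeasure ν]
    (Ψ : ℝ → ℝ) (hΨnn : ∀ x : ℝ, 0 ≤ Ψ x) (hΨconv : ConvexOn ℝ Set.univ Ψ)
    (S : L → Finset ℝ) (h : L → ℝ)
    (hSh : ∀ᵐ l ∂ν, ∃ hne : (S l).Nonempty,
      (S l).min' hne ≤ h l ∧ h l ≤ (S l).max' hne)
    (hmeas : Measurable h) (hint : Integrable h ν)
    (hzero : ∫ l, h l ∂ν = 0)
    (hSmeas : Measurable fun l => ∑ r ∈ S l, Ψ r) :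
    ENNReal.ofReal (Ψ 0) * ν Set.univ ≤
      ∫⁻ l, ENNReal.ofReal (∑ r ∈ S l, Ψ r) ∂ν :=
  stmt_0_general ν Ψ hΨnn hΨconv S h hSh hint hzero
end

section
/- Let c > 0, V₁ > 0, and let F : (0,∞) → ℝ satisfy: F(V) ≥ cV for all V > 0; F is convex and differentiable on (V₁, ∞); and F′(V) → ∞ as V → ∞. Then there exist V₀ ≥ V₁ and a convex function F̃ : (0,∞) → ℝ such that F̃(V) ≤ F(V) for all V > 0, F̃(V) = F(V) for all V ≥ V₀, and lim_{V→0⁺} F̃(V) = 0. -/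
open Filter Set

/-! The tangent line of `F` at a far-out point `V₀` has the large slope `F'(V₀)` and lies below
`F` at `V₁ + 1`; so it stays below `c V` on `(0, V₁]`. Replacing `F` left of `V₀` by this
tangent gives a convex function on all of `ℝ`: after subtracting the tangent it is `0` on
`(-∞, V₀]` and a convex, nondecreasing function on `[V₀, ∞)`. Its maximum with `c V` is the
minorant: it equals `F` from `V₀` on and `c V` near `0`. -/

noncomputable def tangentLine (f : ℝ → ℝ) (a x : ℝ) : ℝ := f a + deriv f a * (x - a)

noncomputable def tangentExtension (f : ℝ → ℝ) (a : ℝ) : ℝ → ℝ :=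
  (Iic a).piecewise (tangentLine f a) f

section TangentLine

variable {f : ℝ → ℝ} {S : Set ℝ} {a x : ℝ}

@[simp]
lemma tangentLine_self : tangentLine f a a = f a := by simp [tangentLine]

lemma tangentLine_smul_add_smul {p q : ℝ} (hpq : p + q = 1) (x y : ℝ) :
    tangentLine f a (p • x + q • y) = p • tangentLine f a x + q • tangentLine f a y := by
  simp only [tangentLine, smul_eq_mul]
  linear_combination (deriv f a * a - f a) * hpq

lemma convexOn_tangentLine : ConvexOn ℝ univ (tangentLine f a) :=
  ⟨convex_univ, fun x _ y _ _ _ _ _ hpq => (tangentLine_smul_add_smul hpq x y).le⟩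

lemma concaveOn_tangentLine : ConcaveOn ℝ univ (tangentLine f a) :=
  ⟨convex_univ, fun x _ y _ _ _ _ _ hpq => (tangentLine_smul_add_smul hpq x y).ge⟩

lemma ConvexOn.tangentLine_le (hf : ConvexOn ℝ S f) (ha : a ∈ S) (hx : x ∈ S)
    (hfa : DifferentiableAt ℝ f a) : tangentLine f a x ≤ f x := by
  rcases lt_trichotomy x a with hxa | rfl | hax
  · have := hf.slope_le_deriv hx ha hxa hfa
    rw [slope_def_field, div_le_iff₀ (sub_pos.2 hxa)] at this
    simp only [tangentLine]; linarith
  · simp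
  · have := hf.deriv_le_slope ha hx hax hfa
    rw [slope_def_field, le_div_iff₀ (sub_pos.2 hax)] at this
    simp only [tangentLine]; linarith

lemma ConvexOn.monotoneOn_sub_tangentLine (hf : ConvexOn ℝ S f) (ha : a ∈ S)
    (hfa : DifferentiableAt ℝ f a) : MonotoneOn (f - tangentLine f a) (S ∩ Ici a) := by
  rintro x ⟨hxS, hax⟩ y ⟨hyS, -⟩ hxy
  rcases hxy.eq_or_lt with rfl | hxy
  · rfl
  have hslope : deriv f a ≤ (f y - f x) / (y - x) := by
    rcases (show a ≤ x from hax).eq_or_lt with rfl | hax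
    · simpa [slope_def_field] using hf.deriv_le_slope hxS hyS hxy hfa
    · have := hf.deriv_le_slope ha hxS hax hfa
      rw [slope_def_field] at this
      exact this.trans (hf.slope_mono_adjacent ha hyS hax hxy)
  rw [le_div_iff₀ (sub_pos.2 hxy)] at hslope
  simp only [Pi.sub_apply, tangentLine]
  linarith

lemma tangentExtension_of_le (hxa : x ≤ a) : tangentExtension f a x = tangentLine f a x :=
  piecewise_eq_of_mem _ _ _ hxa

lemma tangentExtension_of_ge (hax : a ≤ x) : tangentExtension f a x = f x := by
  rcases hax.eq_or_lt with rfl | hax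
  · simp [tangentExtension_of_le]
  · exact piecewise_eq_of_notMem _ _ _ (notMem_Iic.2 hax)

lemma ConvexOn.convexOn_tangentExtension (hf : ConvexOn ℝ (Ici a) f)
    (hfa : DifferentiableAt ℝ f a) : ConvexOn ℝ univ (tangentExtension f a) := by
  have hsplit :
      tangentExtension f a = (Iic a).piecewise 0 (f - tangentLine f a) + tangentLine f a := by
    ext x
    by_cases hxa : x ≤ a <;> simp [tangentExtension, Set.piecewise, hxa]
  rw [hsplit]
  refine ConvexOn.add ?_ convexOn_tangentLine
  refine convexOn_univ_piecewise_Iic_of_antitoneOn_Iic_monotoneOn_Ici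
    (convexOn_const 0 (convex_Iic a)) (hf.sub (concaveOn_tangentLine.subset (subset_univ _)
      (convex_Ici a))) antitoneOn_const ?_ (by simp)
  simpa using hf.monotoneOn_sub_tangentLine self_mem_Ici hfa

end TangentLine

lemma exists_tangentLine_le_mul_of_tendsto_deriv {F : ℝ → ℝ} {V₁ : ℝ} (c : ℝ)
    (hconv : ConvexOn ℝ (Ioi V₁) F) (hdiff : DifferentiableOn ℝ F (Ioi V₁))
    (hderiv : Tendsto (deriv F) atTop atTop) :
    ∃ V₀ > V₁, ∀ V ≤ V₁, tangentLine F V₀ V ≤ c * V := by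
  obtain ⟨V₀, hm, hV₀⟩ :=
    ((hderiv.eventually_ge_atTop (max c (F (V₁ + 1) - c * V₁))).and
      (eventually_gt_atTop (V₁ + 1))).exists
  have hV₁V₀ : V₁ < V₀ := by linarith
  refine ⟨V₀, hV₁V₀, fun V hV => ?_⟩
  have hbelow := hconv.tangentLine_le (x := V₁ + 1) hV₁V₀ (by simp)
    ((hdiff V₀ hV₁V₀).differentiableAt (Ioi_mem_nhds hV₁V₀))
  have hmc := (le_max_left _ _).trans hm
  have hmF := (le_max_right _ _).trans hm
  simp only [tangentLine] at hbelow ⊢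
  nlinarith [mul_le_mul_of_nonneg_right hmc (sub_nonneg.2 hV)]

theorem stmt_6_general (c V₁ : ℝ) (hV₁ : 0 < V₁) (F : ℝ → ℝ)
    (hgrowth : ∀ V > (0:ℝ), c * V ≤ F V)
    (hconv : ConvexOn ℝ (Set.Ioi V₁) F)
    (hdiff : DifferentiableOn ℝ F (Set.Ioi V₁))
    (hderiv : Tendsto (deriv F) atTop atTop) :
    ∃ (V₀ : ℝ) (Ft : ℝ → ℝ), V₁ ≤ V₀ ∧
      ConvexOn ℝ (Set.Ioi 0) Ft ∧
      (∀ V > (0:ℝ), Ft V ≤ F V) ∧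
      (∀ V ≥ V₀, Ft V = F V) ∧
      Tendsto Ft (nhdsWithin 0 (Set.Ioi 0)) (nhds 0) := by
  obtain ⟨V₀, hV₀, hlow⟩ := exists_tangentLine_le_mul_of_tendsto_deriv c hconv hdiff hderiv
  have hFV₀ : DifferentiableAt ℝ F V₀ :=
    (hdiff V₀ hV₀).differentiableAt (Ioi_mem_nhds hV₀)
  have hext_le : ∀ V > 0, tangentExtension F V₀ V ≤ F V := by
    intro V hV
    rcases le_total V₀ V with hV₀V | hVV₀
    · exact (tangentExtension_of_ge hV₀V).le
    rw [tangentExtension_of_le hVV₀]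
    rcases le_or_gt V V₁ with hVV₁ | hV₁V
    · exact (hlow V hVV₁).trans (hgrowth V hV)
    · exact hconv.tangentLine_le hV₀ hV₁V hFV₀
  have hext_conv : ConvexOn ℝ univ (tangentExtension F V₀) :=
    (hconv.subset (Ici_subset_Ioi.2 hV₀) (convex_Ici _)).convexOn_tangentExtension hFV₀
  refine ⟨V₀, fun V => max (c * V) (tangentExtension F V₀ V), hV₀.le,
    (((LinearMap.mulLeft ℝ c).convexOn convex_univ).sup hext_conv).subset (subset_univ _)
      (convex_Ioi 0),
    fun V hV => max_le (hgrowth V hV) (hext_le V hV), fun V hV => ?_, ?_⟩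
  · dsimp only
    rw [tangentExtension_of_ge hV, max_eq_right (hgrowth V (hV₁.trans_le (hV₀.le.trans hV)))]
  · have hnear :
        ∀ᶠ V in nhdsWithin 0 (Ioi 0), c * V = max (c * V) (tangentExtension F V₀ V) := by
      filter_upwards [Ioo_mem_nhdsGT hV₁] with V hV
      rw [tangentExtension_of_le (by linarith [hV.2]), max_eq_left (hlow V hV.2.le)]
    refine Tendsto.congr' hnear ?_
    simpa using ((continuous_const_mul c).tendsto 0).mono_left nhdsWithin_le_nhds

/-- If `F : (0,∞) → ℝ` satisfies `F V ≥ c V`, is convex and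
differentiable on `(V₁,∞)`, and `F' → ∞` at infinity, then there is `V₀ ≥ V₁` and a
convex minorant `F̃` of `F` on `(0,∞)` with `F̃ = F` on `[V₀,∞)` and `F̃ → 0` at `0⁺`. -/
theorem stmt_6 (c V₁ : ℝ) (hc : 0 < c) (hV₁ : 0 < V₁) (F : ℝ → ℝ)
    (hgrowth : ∀ V > (0:ℝ), c * V ≤ F V)
    (hconv : ConvexOn ℝ (Set.Ioi V₁) F)
    (hdiff : DifferentiableOn ℝ F (Set.Ioi V₁))
    (hderiv : Tendsto (deriv F) atTop atTop) :
    ∃ (V₀ : ℝ) (Ft : ℝ → ℝ), V₁ ≤ V₀ ∧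
      ConvexOn ℝ (Set.Ioi 0) Ft ∧
      (∀ V > (0:ℝ), Ft V ≤ F V) ∧
      (∀ V ≥ V₀, Ft V = F V) ∧
      Tendsto Ft (nhdsWithin 0 (Set.Ioi 0)) (nhds 0) :=
  stmt_6_general c V₁ hV₁ F hgrowth hconv hdiff hderiv
end

section
/- Let n ≥ 2 and let φ : [0,∞) → ℝ be continuous, and suppose there exist r₀ > 0 and ε > 0 such that φ is twice continuously differentiable on (r₀, ∞) with φ″(r) ≥ ε/r for all r > r₀. Define V(r) = ∫₀^r t^{n−1} e^{φ(t)} dt and S(r) = r^{n−1} e^{φ(r)}, and let F = S ∘ V^{−1} on (0, lim_{r→∞} V(r)). Then: (i) V(r) → ∞ as r → ∞, so F is defined on all of (0,∞); (ii) there exists V₁ > 0 such that F is convex on (V₁, ∞); (iii) F′(V) → ∞ as V → ∞; and (iv) there exists c > 0 such that F(V) ≥ cV for all V > 0. -/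
/-!
Write `S r = r^k e^{φ r}` with `k = n - 1` and `V r = ∫₀^r S`. Since `V' = S > 0`, the relation
`F (V r) = S r` gives `F'(V r) = S'(r)/S(r) = k/r + φ'(r)`, the weighted mean curvature of the
sphere of radius `r`. From `φ'' ≥ ε/r`, `φ' ≥ ε log r - C → ∞`; hence `S` is eventually
increasing (so `V → ∞`) and `F' → ∞`. Moreover `(k/r + φ')' ≥ (ε r - k)/r² ≥ 0` for `r ≥ k/ε`,
which is the convexity of `F`. For the linear bound: near the origin `S/V ≥ e^{-2A}/r` when
`|φ| ≤ A`, and for large `r` the inequality `S' ≥ S` gives `V(r) - V(R) ≤ S(r) - S(R)`, so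
`V ≤ K S`.
-/

open MeasureTheory Filter Set Topology Real

theorem monotoneOn_Ici_of_hasDerivAt_nonneg {f f' : ℝ → ℝ} {a : ℝ}
    (hf : ∀ x ≥ a, HasDerivAt f (f' x) x) (hf' : ∀ x > a, 0 ≤ f' x) :
    MonotoneOn f (Ici a) := by
  refine monotoneOn_of_hasDerivWithinAt_nonneg (f' := f') (convex_Ici a)
    (fun x hx => (hf x hx).continuousAt.continuousWithinAt) (fun x hx => ?_) (fun x hx => ?_)
  · rw [interior_Ici] at hx ⊢
    exact (hf x (le_of_lt hx)).hasDerivWithinAt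
  · rw [interior_Ici] at hx
    exact hf' x hx

theorem tendsto_atTop_of_hasDerivAt_ge_div {f f' : ℝ → ℝ} {a ε : ℝ} (hε : 0 < ε)
    (hf : ∀ x > a, HasDerivAt f (f' x) x) (hf' : ∀ x > a, ε / x ≤ f' x) :
    Tendsto f atTop atTop := by
  set b := max a 0 + 1
  have hab : a < b := by linarith [le_max_left a 0]
  have hb : 0 < b := by linarith [le_max_right a 0]
  have hmono : MonotoneOn (fun x => f x - ε * log x) (Ici b) := by
    refine monotoneOn_Ici_of_hasDerivAt_nonneg (f' := fun x => f' x - ε * x⁻¹)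
      (fun x hx => (hf x (hab.trans_le hx)).sub
        ((hasDerivAt_log (hb.trans_le hx).ne').const_mul ε)) (fun x hx => ?_)
    have := hf' x (hab.trans hx)
    rw [div_eq_mul_inv] at this
    linarith
  have hlow : ∀ x ≥ b, f b - ε * log b + ε * log x ≤ f x := fun x hx => by
    have := hmono self_mem_Ici (mem_Ici.2 hx) hx
    simp only at this
    linarith
  exact tendsto_atTop_mono' atTop (eventually_atTop.2 ⟨b, hlow⟩)
    (tendsto_atTop_add_const_left _ _ (tendsto_log_atTop.const_mul_atTop hε))

theorem tendsto_atTop_of_hasDerivAt_of_monotoneOn {f g : ℝ → ℝ} {a : ℝ}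
    (hf : ∀ x ≥ a, HasDerivAt f (g x) x) (hg : MonotoneOn g (Ici a)) (ha : 0 < g a) :
    Tendsto f atTop atTop := by
  have hmono : MonotoneOn (fun x => f x - g a * x) (Ici a) := by
    refine monotoneOn_Ici_of_hasDerivAt_nonneg
      (fun x hx => (hf x hx).sub ((hasDerivAt_id x).const_mul (g a))) (fun x hx => ?_)
    have := hg self_mem_Ici (mem_Ici.2 hx.le) hx.le
    simp only [mul_one]
    linarith
  have hlow : ∀ x ≥ a, f a - g a * a + g a * x ≤ f x := fun x hx => by
    have := hmono self_mem_Ici (mem_Ici.2 hx) hx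
    simp only at this
    linarith
  exact tendsto_atTop_mono' atTop (eventually_atTop.2 ⟨a, hlow⟩)
    (tendsto_atTop_add_const_left _ _ (tendsto_id.const_mul_atTop ha))

theorem exists_pos_le_mul_of_hasDerivAt_of_le {f g g' : ℝ → ℝ} {a : ℝ}
    (hf : ∀ x ≥ a, HasDerivAt f (g x) x) (hg : ∀ x ≥ a, HasDerivAt g (g' x) x)
    (hgg' : ∀ x ≥ a, g x ≤ g' x) (hg₀ : ∀ x ≥ a, 0 < g x) :
    ∃ K > 0, ∀ x ≥ a, f x ≤ K * g x := by
  have hg_mono : MonotoneOn g (Ici a) :=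
    monotoneOn_Ici_of_hasDerivAt_nonneg hg fun x hx => (hg₀ x hx.le).le.trans (hgg' x hx.le)
  have hgf_mono : MonotoneOn (fun x => g x - f x) (Ici a) :=
    monotoneOn_Ici_of_hasDerivAt_nonneg (fun x hx => (hg x hx).sub (hf x hx))
      fun x hx => sub_nonneg.2 (hgg' x hx.le)
  have hga := hg₀ a le_rfl
  refine ⟨|f a| / g a + 1, by positivity, fun x hx => ?_⟩
  have h1 := hgf_mono self_mem_Ici (mem_Ici.2 hx) hx
  have h2 : |f a| ≤ |f a| / g a * g x :=
    (div_mul_cancel₀ _ hga.ne').symm.le.trans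
      (mul_le_mul_of_nonneg_left (hg_mono self_mem_Ici (mem_Ici.2 hx) hx) (by positivity))
  simp only at h1
  linarith [le_abs_self (f a)]

theorem Ioi_subset_image_Ioi_of_continuousOn {α δ : Type*} [ConditionallyCompleteLinearOrder α]
    [TopologicalSpace α] [OrderTopology α] [DenselyOrdered α] [LinearOrder δ]
    [TopologicalSpace δ] [OrderClosedTopology δ] {f : α → δ} {a : α}
    (hf : ContinuousOn f (Ici a)) (htop : Tendsto f atTop atTop) : Ioi (f a) ⊆ f '' Ioi a := by
  intro v hv
  obtain ⟨r, hr, rfl⟩ := intermediate_value_Ici hf htop (mem_Ici.2 (le_of_lt hv))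
  exact ⟨r, lt_of_le_of_ne hr (ne_of_apply_ne f hv.ne), rfl⟩

theorem HasStrictDerivAt.hasDerivAt_of_comp_eventuallyEq {𝕜 : Type*}
    [NontriviallyNormedField 𝕜] [CompleteSpace 𝕜] {F V S : 𝕜 → 𝕜} {V' S' a : 𝕜}
    (hV : HasStrictDerivAt V V' a) (hV' : V' ≠ 0) (hS : HasDerivAt S S' a) (hF : F ∘ V =ᶠ[𝓝 a] S) :
    HasDerivAt F (S' / V') (V a) := by
  set g := hV.localInverse V V' a hV'
  have hg : HasStrictDerivAt g V'⁻¹ (V a) := hV.to_localInverse hV'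
  have hga : g (V a) = a := HasStrictFDerivAt.localInverse_apply_image _
  have hg_tendsto : Tendsto g (𝓝 (V a)) (𝓝 a) := by
    simpa only [hga] using hg.hasDerivAt.continuousAt.tendsto
  have hFg : F =ᶠ[𝓝 (V a)] S ∘ g := by
    filter_upwards [hV.eventually_right_inverse hV', hg_tendsto.eventually hF] with y hVy hFy
    rw [Function.comp_apply, ← hFy, Function.comp_apply, hVy]
  rw [div_eq_mul_inv]
  exact hFg.hasDerivAt_iff.2 ((hga ▸ hS).comp (V a) hg.hasDerivAt)

section CompDeriv

variable {F V g : ℝ → ℝ} {a : ℝ}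

theorem convexOn_Ioi_of_hasDerivAt_comp (hV : StrictMonoOn V (Ici a))
    (hsurj : Ioi (V a) ⊆ V '' Ioi a) (hF : ∀ r > a, HasDerivAt F (g r) (V r))
    (hg : MonotoneOn g (Ioi a)) : ConvexOn ℝ (Ioi (V a)) F := by
  have hdiff : ∀ v ∈ Ioi (V a), DifferentiableAt ℝ F v := by
    intro v hv
    obtain ⟨r, hr, rfl⟩ := hsurj hv
    exact (hF r hr).differentiableAt
  refine MonotoneOn.convexOn_of_deriv (convex_Ioi _)
    (fun v hv => (hdiff v hv).continuousAt.continuousWithinAt)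
    (fun v hv => (hdiff v (interior_subset hv)).differentiableWithinAt) ?_
  rw [interior_Ioi]
  intro v hv w hw hvw
  obtain ⟨r, hr, rfl⟩ := hsurj hv
  obtain ⟨s, hs, rfl⟩ := hsurj hw
  rw [(hF r hr).deriv, (hF s hs).deriv]
  exact hg hr hs ((hV.le_iff_le (mem_Ici.2 (le_of_lt hr)) (mem_Ici.2 (le_of_lt hs))).1 hvw)

theorem tendsto_deriv_atTop_of_hasDerivAt_comp (hV : StrictMonoOn V (Ici a))
    (hsurj : Ioi (V a) ⊆ V '' Ioi a) (hF : ∀ r > a, HasDerivAt F (g r) (V r))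
    (hg : Tendsto g atTop atTop) : Tendsto (deriv F) atTop atTop := by
  rw [tendsto_atTop]
  intro B
  obtain ⟨b, hb⟩ := eventually_atTop.1 ((hg.eventually_ge_atTop B).and (eventually_gt_atTop a))
  have hab : a < b := (hb b le_rfl).2
  filter_upwards [eventually_gt_atTop (V b)] with v hv
  obtain ⟨r, hr, rfl⟩ := hsurj ((hV self_mem_Ici (mem_Ici.2 hab.le) hab).trans hv)
  have hbr : b < r := (hV.lt_iff_lt (mem_Ici.2 hab.le) (mem_Ici.2 (le_of_lt hr))).1 hv
  rw [(hF r hr).deriv]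
  exact (hb r hbr.le).1

end CompDeriv

namespace RadialDensity

noncomputable def radialArea (k : ℕ) (φ : ℝ → ℝ) (r : ℝ) : ℝ := r ^ k * exp (φ r)

noncomputable def radialVolume (k : ℕ) (φ : ℝ → ℝ) (r : ℝ) : ℝ :=
  ∫ t in (0 : ℝ)..r, radialArea k φ t

noncomputable def sphereCurvature (k : ℕ) (φ' : ℝ → ℝ) (r : ℝ) : ℝ := k / r + φ' r

variable {k : ℕ} {φ φ' φ'' : ℝ → ℝ} {r a : ℝ}

theorem radialArea_pos (hr : 0 < r) : 0 < radialArea k φ r :=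
  mul_pos (pow_pos hr k) (exp_pos _)

theorem continuousOn_radialArea (hφ : ContinuousOn φ (Ici 0)) :
    ContinuousOn (radialArea k φ) (Ici 0) :=
  (continuous_pow k).continuousOn.mul (continuous_exp.comp_continuousOn hφ)

theorem hasDerivAt_radialArea (hr : r ≠ 0) (hφ : HasDerivAt φ (φ' r) r) :
    HasDerivAt (radialArea k φ) (radialArea k φ r * sphereCurvature k φ' r) r := by
  refine ((hasDerivAt_pow k r).mul ((hasDerivAt_exp (φ r)).comp r hφ)).congr_deriv ?_
  rcases k with _ | k
  · simp [radialArea, sphereCurvature]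
  · simp only [radialArea, sphereCurvature, Function.comp_apply, Nat.add_sub_cancel]
    field_simp
    ring

theorem hasDerivAt_sphereCurvature (hr : r ≠ 0) (hφ' : HasDerivAt φ' (φ'' r) r) :
    HasDerivAt (sphereCurvature k φ') (φ'' r - k / r ^ 2) r := by
  refine (((hasDerivAt_inv hr).const_mul (k : ℝ)).add hφ').congr_deriv ?_
  ring

theorem monotoneOn_radialArea (ha : 0 < a) (hφ : ∀ r ≥ a, HasDerivAt φ (φ' r) r)
    (hφ' : ∀ r ≥ a, 0 ≤ φ' r) : MonotoneOn (radialArea k φ) (Ici a) :=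
  monotoneOn_Ici_of_hasDerivAt_nonneg
    (fun r hr => hasDerivAt_radialArea (ha.trans_le hr).ne' (hφ r hr)) fun r hr =>
      mul_nonneg (radialArea_pos (ha.trans hr)).le
        (add_nonneg (div_nonneg k.cast_nonneg (ha.trans hr).le) (hφ' r hr.le))

theorem monotoneOn_sphereCurvature {ε : ℝ} (ha : 0 < a) (hka : k ≤ ε * a)
    (hφ' : ∀ r ≥ a, HasDerivAt φ' (φ'' r) r) (hφ'' : ∀ r ≥ a, ε / r ≤ φ'' r) :
    MonotoneOn (sphereCurvature k φ') (Ici a) := by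
  refine monotoneOn_Ici_of_hasDerivAt_nonneg
    (fun r hr => hasDerivAt_sphereCurvature (ha.trans_le hr).ne' (hφ' r hr)) fun r hr => ?_
  have hr₀ : 0 < r := ha.trans hr
  have hε : 0 ≤ ε := le_of_mul_le_mul_right (by simpa using k.cast_nonneg.trans hka) ha
  have : (k : ℝ) / r ^ 2 ≤ ε / r := by
    rw [div_le_div_iff₀ (by positivity) hr₀]
    nlinarith [mul_le_mul_of_nonneg_left hr.le hε]
  linarith [hφ'' r hr.le]

theorem tendsto_sphereCurvature_atTop (hφ' : Tendsto φ' atTop atTop) :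
    Tendsto (sphereCurvature k φ') atTop atTop :=
  tendsto_atTop_mono' atTop ((eventually_gt_atTop 0).mono fun _ hr =>
    le_add_of_nonneg_left (div_nonneg k.cast_nonneg hr.le)) hφ'

variable (hφ : ContinuousOn φ (Ici 0))
include hφ

theorem hasStrictDerivAt_radialVolume (hr : 0 < r) :
    HasStrictDerivAt (radialVolume k φ) (radialArea k φ r) r := by
  have hcont := (continuousOn_radialArea (k := k) hφ).mono (Ioi_subset_Ici_self (a := 0))
  exact intervalIntegral.integral_hasStrictDerivAt_right
    (((continuousOn_radialArea hφ).mono Icc_subset_Ici_self).intervalIntegrable_of_Icc hr.le)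
    (hcont.stronglyMeasurableAtFilter isOpen_Ioi r hr)
    (hcont.continuousAt (isOpen_Ioi.mem_nhds hr))

theorem continuousOn_radialVolume : ContinuousOn (radialVolume k φ) (Ici 0) := by
  intro x hx
  have hint : IntervalIntegrable (radialArea k φ) volume (min 0 0) (max 0 (x + 1)) := by
    rw [min_self, max_eq_right (by linarith [mem_Ici.1 hx])]
    exact ((continuousOn_radialArea hφ).mono Icc_subset_Ici_self).intervalIntegrable_of_Icc
      (by linarith [mem_Ici.1 hx])
  have hx' : Icc 0 (x + 1) ∈ 𝓝[Ici 0] x := by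
    rw [← Ici_inter_Iic]
    exact inter_mem_nhdsWithin _ (Iic_mem_nhds (by linarith))
  exact (intervalIntegral.continuousWithinAt_primitive (measure_singleton x) hint
    ).mono_of_mem_nhdsWithin hx'

theorem strictMonoOn_radialVolume : StrictMonoOn (radialVolume k φ) (Ici 0) := by
  refine strictMonoOn_of_hasDerivWithinAt_pos (f' := radialArea k φ) (convex_Ici 0)
    (continuousOn_radialVolume hφ) (fun r hr => ?_) (fun r hr => ?_)
  · rw [interior_Ici] at hr ⊢
    exact (hasStrictDerivAt_radialVolume hφ hr).hasDerivAt.hasDerivWithinAt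
  · rw [interior_Ici] at hr
    exact radialArea_pos hr

theorem radialVolume_pos (hr : 0 < r) : 0 < radialVolume k φ r := by
  have := strictMonoOn_radialVolume (k := k) hφ self_mem_Ici (mem_Ici.2 hr.le) hr
  rwa [radialVolume, intervalIntegral.integral_same] at this

theorem tendsto_radialVolume_atTop (ha : 0 < a) (hφ' : ∀ r ≥ a, HasDerivAt φ (φ' r) r)
    (hφ'₀ : ∀ r ≥ a, 0 ≤ φ' r) : Tendsto (radialVolume k φ) atTop atTop :=
  tendsto_atTop_of_hasDerivAt_of_monotoneOn
    (fun _ hr => (hasStrictDerivAt_radialVolume hφ (ha.trans_le hr)).hasDerivAt)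
    (monotoneOn_radialArea ha hφ' hφ'₀) (radialArea_pos ha)

theorem Ioi_subset_image_radialVolume (htop : Tendsto (radialVolume k φ) atTop atTop)
    (ha : 0 ≤ a) : Ioi (radialVolume k φ a) ⊆ radialVolume k φ '' Ioi a :=
  Ioi_subset_image_Ioi_of_continuousOn
    ((continuousOn_radialVolume hφ).mono (Ici_subset_Ici.2 ha)) htop

theorem hasDerivAt_of_comp_radialVolume {F : ℝ → ℝ}
    (hF : ∀ r > 0, F (radialVolume k φ r) = radialArea k φ r) (hr : 0 < r)
    (hφ' : HasDerivAt φ (φ' r) r) :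
    HasDerivAt F (sphereCurvature k φ' r) (radialVolume k φ r) := by
  have := (hasStrictDerivAt_radialVolume hφ hr).hasDerivAt_of_comp_eventuallyEq
    (radialArea_pos hr).ne' (hasDerivAt_radialArea hr.ne' hφ')
    ((eventually_gt_nhds hr).mono hF)
  rwa [mul_div_cancel_left₀ _ (radialArea_pos hr).ne'] at this

theorem exists_pos_mul_radialVolume_le_on_Ioc (ha : 0 < a) :
    ∃ c > 0, ∀ r ∈ Ioc 0 a, c * radialVolume k φ r ≤ radialArea k φ r := by
  obtain ⟨A, hA⟩ := isCompact_Icc.exists_bound_of_continuousOn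
    (hφ.mono (Icc_subset_Ici_self : Icc 0 a ⊆ Ici 0))
  refine ⟨exp (-A) / (exp A * a), by positivity, ?_⟩
  rintro r ⟨hr, hra⟩
  have hV : radialVolume k φ r ≤ r ^ k * exp A * r := by
    have := intervalIntegral.norm_integral_le_of_norm_le_const (a := 0) (b := r)
      (C := r ^ k * exp A) (f := radialArea k φ) fun t ht => by
        rw [uIoc_of_le hr.le] at ht
        rw [radialArea, norm_mul, norm_pow, norm_of_nonneg ht.1.le, norm_of_nonneg (exp_pos _).le]
        exact mul_le_mul (pow_le_pow_left₀ ht.1.le ht.2 k)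
          (exp_le_exp.2 ((le_abs_self _).trans (hA t ⟨ht.1.le, ht.2.trans hra⟩)))
          (exp_pos _).le (pow_nonneg hr.le k)
    rw [sub_zero, abs_of_pos hr] at this
    exact (le_abs_self _).trans this
  have hS : r ^ k * exp (-A) ≤ radialArea k φ r :=
    mul_le_mul_of_nonneg_left (exp_le_exp.2 (neg_le_of_abs_le (hA r ⟨hr.le, hra⟩)))
      (pow_nonneg hr.le k)
  calc exp (-A) / (exp A * a) * radialVolume k φ r
      ≤ exp (-A) / (exp A * a) * (r ^ k * exp A * r) := by gcongr
    _ = r ^ k * exp (-A) * (r / a) := by field_simp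
    _ ≤ r ^ k * exp (-A) * 1 := by gcongr; exact div_le_one_of_le₀ hra ha.le
    _ ≤ radialArea k φ r := by rwa [mul_one]

theorem exists_pos_mul_radialVolume_le (ha : 0 < a) (hφ' : ∀ r ≥ a, HasDerivAt φ (φ' r) r)
    (hφ'₁ : ∀ r ≥ a, 1 ≤ φ' r) :
    ∃ c > 0, ∀ r > 0, c * radialVolume k φ r ≤ radialArea k φ r := by
  obtain ⟨c, hc, hsmall⟩ := exists_pos_mul_radialVolume_le_on_Ioc (k := k) hφ ha
  obtain ⟨K, hK, hlarge⟩ := exists_pos_le_mul_of_hasDerivAt_of_le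
    (fun r hr => (hasStrictDerivAt_radialVolume (k := k) hφ (ha.trans_le hr)).hasDerivAt)
    (fun r hr => hasDerivAt_radialArea (ha.trans_le hr).ne' (hφ' r hr))
    (fun r hr => le_mul_of_one_le_right (radialArea_pos (ha.trans_le hr)).le
      (le_add_of_nonneg_of_le (div_nonneg k.cast_nonneg (ha.trans_le hr).le) (hφ'₁ r hr)))
    (fun r hr => radialArea_pos (ha.trans_le hr))
  refine ⟨min c K⁻¹, lt_min hc (inv_pos.2 hK), fun r hr => ?_⟩
  have hV := (radialVolume_pos (k := k) hφ hr).le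
  rcases le_or_gt r a with hra | hra
  · exact (mul_le_mul_of_nonneg_right (min_le_left _ _) hV).trans (hsmall r ⟨hr, hra⟩)
  · calc min c K⁻¹ * radialVolume k φ r ≤ K⁻¹ * (K * radialArea k φ r) :=
          mul_le_mul (min_le_right _ _) (hlarge r hra.le) hV (inv_pos.2 hK).le
      _ = radialArea k φ r := inv_mul_cancel_left₀ hK.ne' _

end RadialDensity

open RadialDensity

theorem stmt_7_general (n : ℕ) (φ φ' φ'' : ℝ → ℝ)
    (hφc : ContinuousOn φ (Set.Ici 0))
    (r₀ ε : ℝ) (hr₀ : 0 < r₀) (hε : 0 < ε)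
    (hφ' : ∀ r > r₀, HasDerivAt φ (φ' r) r)
    (hφ'' : ∀ r > r₀, HasDerivAt φ' (φ'' r) r)
    (hφ''lb : ∀ r > r₀, ε / r ≤ φ'' r)
    (V S F : ℝ → ℝ)
    (hV : ∀ r : ℝ, V r = ∫ t in (0:ℝ)..r, t ^ (n - 1) * Real.exp (φ t))
    (hS : ∀ r : ℝ, S r = r ^ (n - 1) * Real.exp (φ r))
    (hF : ∀ r > (0:ℝ), F (V r) = S r) :
    Tendsto V atTop atTop ∧
    (∃ V₁ > (0:ℝ), ConvexOn ℝ (Set.Ioi V₁) F) ∧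
    Tendsto (deriv F) atTop atTop ∧
    (∃ c > (0:ℝ), ∀ v > (0:ℝ), c * v ≤ F v) := by
  set k := n - 1
  obtain rfl : V = radialVolume k φ := funext hV
  obtain rfl : S = radialArea k φ := funext hS
  have hφ'top := tendsto_atTop_of_hasDerivAt_ge_div hε hφ'' hφ''lb
  obtain ⟨R, hR⟩ := eventually_atTop.1 ((hφ'top.eventually_ge_atTop 1).and
    ((eventually_gt_atTop r₀).and (eventually_ge_atTop (k / ε))))
  obtain ⟨-, hr₀R, hkR⟩ := hR R le_rfl
  have hR₀ : 0 < R := hr₀.trans hr₀R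
  have hφ'R : ∀ r ≥ R, HasDerivAt φ (φ' r) r := fun r hr => hφ' r (hR r hr).2.1
  have hVtop := tendsto_radialVolume_atTop (k := k) hφc hR₀ hφ'R
    fun r hr => zero_le_one.trans (hR r hr).1
  have hmono := (strictMonoOn_radialVolume (k := k) hφc).mono (Ici_subset_Ici.2 hR₀.le)
  have hsurj := Ioi_subset_image_radialVolume hφc hVtop hR₀.le
  have hFderiv : ∀ r > R, HasDerivAt F (sphereCurvature k φ' r) (radialVolume k φ r) :=
    fun r hr => hasDerivAt_of_comp_radialVolume hφc hF (hR₀.trans hr) (hφ'R r hr.le)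
  have hcurv : MonotoneOn (sphereCurvature k φ') (Ici R) :=
    monotoneOn_sphereCurvature hR₀ ((div_le_iff₀' hε).1 hkR)
      (fun r hr => hφ'' r (hr₀R.trans_le hr)) (fun r hr => hφ''lb r (hr₀R.trans_le hr))
  obtain ⟨c, hc, hcV⟩ := exists_pos_mul_radialVolume_le hφc hR₀ hφ'R fun r hr => (hR r hr).1
  refine ⟨hVtop, ⟨_, radialVolume_pos hφc hR₀,
    convexOn_Ioi_of_hasDerivAt_comp hmono hsurj hFderiv (hcurv.mono Ioi_subset_Ici_self)⟩,
    tendsto_deriv_atTop_of_hasDerivAt_comp hmono hsurj hFderiv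
      (tendsto_sphereCurvature_atTop hφ'top), c, hc, fun v hv => ?_⟩
  obtain ⟨r, hr, rfl⟩ := Ioi_subset_image_radialVolume hφc hVtop le_rfl
    (by rwa [radialVolume, intervalIntegral.integral_same])
  rw [hF r hr]
  exact hcV r hr

/-- In `ℝⁿ` with radial simple density `e^{φ(r)}`, `φ` continuous on
`[0,∞)` and twice continuously differentiable on `(r₀,∞)` with `φ'' ≥ ε/r` there, the
function `F` sending ball volume `V(r) = ∫₀^r t^{n-1}e^{φ(t)} dt` to sphere area
`S(r) = r^{n-1}e^{φ(r)}` satisfies: (i) `V → ∞`; (ii) `F` is eventually convex;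
(iii) `F' → ∞`; (iv) `F` is bounded below by a line through the origin of positive
slope. -/
theorem stmt_7 (n : ℕ) (hn : 2 ≤ n) (φ φ' φ'' : ℝ → ℝ)
    (hφc : ContinuousOn φ (Set.Ici 0))
    (r₀ ε : ℝ) (hr₀ : 0 < r₀) (hε : 0 < ε)
    (hφ' : ∀ r > r₀, HasDerivAt φ (φ' r) r)
    (hφ'' : ∀ r > r₀, HasDerivAt φ' (φ'' r) r)
    (hφ''c : ContinuousOn φ'' (Set.Ioi r₀))
    (hφ''lb : ∀ r > r₀, ε / r ≤ φ'' r)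
    (V S F : ℝ → ℝ)
    (hV : ∀ r : ℝ, V r = ∫ t in (0:ℝ)..r, t ^ (n - 1) * Real.exp (φ t))
    (hS : ∀ r : ℝ, S r = r ^ (n - 1) * Real.exp (φ r))
    (hF : ∀ r > (0:ℝ), F (V r) = S r) :
    Tendsto V atTop atTop ∧
    (∃ V₁ > (0:ℝ), ConvexOn ℝ (Set.Ioi V₁) F) ∧
    Tendsto (deriv F) atTop atTop ∧
    (∃ c > (0:ℝ), ∀ v > (0:ℝ), c * v ≤ F v) :=
  stmt_7_general n φ φ' φ'' hφc r₀ ε hr₀ hε hφ' hφ'' hφ''lb V S F hV hS hF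
end

section
/- Let n ≥ 2, let φ : (0,∞) → ℝ be twice differentiable at a point r > 0 and continuous on (0,∞), define V(r) = ∫₀^r t^{n−1} e^{φ(t)} dt (assumed finite for all r > 0) and S(r) = r^{n−1} e^{φ(r)}, and let F = S ∘ V^{−1}. Then F is twice differentiable at V(r) with F″(V(r)) = (φ″(r) − (n−1)/r²) / S(r). Consequently, if φ is twice continuously differentiable on an interval (a,b) ⊂ (0,∞), then F is convex on (V(a), V(b)) if and only if φ″(r) ≥ (n−1)/r² for all r ∈ (a,b). -/
/-!
Since `V' = S` and `F ∘ V = S`, differentiating `F (V t) = S t` gives `F' (V t) = S' t / S t`,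
the logarithmic derivative `g t = (n - 1) / t + φ' t` of `S`. Differentiating once more,
`F'' (V t) = g' t / S t = (φ'' t - (n - 1) / t²) / S t`. As `V` maps `(a, b)` increasingly onto
`(V a, V b)` and `S > 0`, convexity of `F` there is equivalent to `g' ≥ 0` on `(a, b)`.
-/

open MeasureTheory Filter Set Topology

theorem HasDerivAt.pow_mul_exp {φ : ℝ → ℝ} {φ' t : ℝ} (hφ : HasDerivAt φ φ' t) (ht : t ≠ 0)
    (k : ℕ) :
    HasDerivAt (fun u => u ^ k * Real.exp (φ u)) (t ^ k * Real.exp (φ t) * (k / t + φ')) t := by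
  refine ((hasDerivAt_pow k t).fun_mul hφ.exp).congr_deriv ?_
  rcases k with _ | k
  · simp
  · rw [Nat.add_sub_cancel]
    field_simp
    ring

theorem HasDerivAt.const_div_add {ψ : ℝ → ℝ} {ψ' r : ℝ} (hψ : HasDerivAt ψ ψ' r) (hr : r ≠ 0)
    (c : ℝ) : HasDerivAt (fun t => c / t + ψ t) (ψ' - c / r ^ 2) r := by
  refine (((hasDerivAt_inv hr).const_mul c).fun_add hψ).congr_deriv (by ring)
    |>.congr_of_eventuallyEq ?_
  simp only [div_eq_mul_inv, EventuallyEq.rfl]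

theorem hasStrictDerivAt_integral_Ioc_zero {f : ℝ → ℝ} (hf : ContinuousOn f (Ioi 0))
    (hint : ∀ r > 0, IntegrableOn f (Ioc 0 r)) {t : ℝ} (ht : 0 < t) :
    HasStrictDerivAt (fun r => ∫ x in Ioc 0 r, f x) (f t) t := by
  have hft : IntervalIntegrable f volume 0 t :=
    (intervalIntegrable_iff_integrableOn_Ioc_of_le ht.le).2 (hint t ht)
  refine (intervalIntegral.integral_hasStrictDerivAt_right hft
    (hf.stronglyMeasurableAtFilter isOpen_Ioi t ht)
    (hf.continuousAt (Ioi_mem_nhds ht))).congr_of_eventuallyEq ?_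
  filter_upwards [Ioi_mem_nhds ht] with u hu
  rw [intervalIntegral.integral_of_le hu.le]

theorem convexOn_iff_deriv2_nonneg {D : Set ℝ} {f : ℝ → ℝ} (hD : Convex ℝ D) (hDo : IsOpen D)
    (hf : ∀ x ∈ D, DifferentiableAt ℝ f x) (hf' : ∀ x ∈ D, DifferentiableAt ℝ (deriv f) x) :
    ConvexOn ℝ D f ↔ ∀ x ∈ D, 0 ≤ deriv^[2] f x := by
  refine ⟨fun hconv x hx => ?_, convexOn_of_deriv2_nonneg' hD
    (fun x hx => (hf x hx).differentiableWithinAt) (fun x hx => (hf' x hx).differentiableWithinAt)⟩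
  have hacc : AccPt x (𝓟 D) := accPt_iff_frequently_nhdsNE.2
    (eventually_nhdsWithin_of_eventually_nhds (hDo.mem_nhds hx)).frequently
  exact (hf' x hx).hasDerivAt.hasDerivWithinAt.nonneg_of_monotoneOn hacc
    (hconv.monotoneOn_deriv hf)

theorem HasStrictDerivAt.hasDerivAt_of_comp_eq {V F G : ℝ → ℝ} {V' G' r : ℝ}
    (hV : HasStrictDerivAt V V' r) (hV' : V' ≠ 0) (hFG : ∀ᶠ x in 𝓝 r, F (V x) = G x)
    (hG : HasDerivAt G G' r) : HasDerivAt F (G' / V') (V r) := by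
  set W := hV.localInverse V V' r hV'
  have hW : HasDerivAt W V'⁻¹ (V r) := (hV.to_localInverse hV').hasDerivAt
  have hWr : W (V r) = r := (hV.eventually_left_inverse hV').self_of_nhds
  have hFW : F =ᶠ[𝓝 (V r)] G ∘ W := by
    have hWt : Tendsto W (𝓝 (V r)) (𝓝 r) := by
      simpa only [hWr] using hW.continuousAt.tendsto
    filter_upwards [hV.eventually_right_inverse hV', hWt.eventually hFG] with v hv hFGv
    rw [Function.comp_apply, ← hFGv, hv]
  rw [div_eq_mul_inv]
  exact ((hWr ▸ hG).comp (V r) hW).congr_of_eventuallyEq hFW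

section CompEqDeriv

variable {V S F g : ℝ → ℝ}

theorem hasDerivAt_deriv_of_comp_eq_deriv {g' r : ℝ}
    (hV : ∀ᶠ t in 𝓝 r, HasStrictDerivAt V (S t) t) (hS0 : ∀ᶠ t in 𝓝 r, S t ≠ 0)
    (hF : ∀ᶠ t in 𝓝 r, F (V t) = S t) (hS : ∀ᶠ t in 𝓝 r, HasDerivAt S (S t * g t) t)
    (hg : HasDerivAt g g' r) :
    (∀ᶠ v in 𝓝 (V r), HasDerivAt F (deriv F v) v) ∧ HasDerivAt (deriv F) (g' / S r) (V r) := by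
  have hF' : ∀ᶠ t in 𝓝 r, HasDerivAt F (g t) (V t) := by
    filter_upwards [hV, hS0, hF.eventually_nhds, hS] with t hVt hSt hFt hSt'
    simpa only [mul_div_cancel_left₀ _ hSt] using hVt.hasDerivAt_of_comp_eq hSt hFt hSt'
  refine ⟨?_, hV.self_of_nhds.hasDerivAt_of_comp_eq hS0.self_of_nhds
    (hF'.mono fun t ht => ht.deriv) hg⟩
  rw [← hV.self_of_nhds.map_nhds_eq hS0.self_of_nhds]
  exact hF'.mono fun t ht => ht.differentiableAt.hasDerivAt

theorem convexOn_Ioo_iff_of_comp_eq_deriv {g' : ℝ → ℝ} {a b : ℝ} (hab : a ≤ b)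
    (hV : ∀ t ∈ Icc a b, HasStrictDerivAt V (S t) t) (hS0 : ∀ t ∈ Ioo a b, 0 < S t)
    (hF : ∀ t ∈ Ioo a b, F (V t) = S t) (hS : ∀ t ∈ Ioo a b, HasDerivAt S (S t * g t) t)
    (hg : ∀ t ∈ Ioo a b, HasDerivAt g (g' t) t) :
    ConvexOn ℝ (Ioo (V a) (V b)) F ↔ ∀ r ∈ Ioo a b, 0 ≤ g' r := by
  have hF2 : ∀ r ∈ Ioo a b, (∀ᶠ v in 𝓝 (V r), HasDerivAt F (deriv F v) v) ∧
      HasDerivAt (deriv F) (g' r / S r) (V r) := fun r hr =>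
    have hnhds : Ioo a b ∈ 𝓝 r := isOpen_Ioo.mem_nhds hr
    hasDerivAt_deriv_of_comp_eq_deriv
      (mem_of_superset hnhds fun t ht => hV t (Ioo_subset_Icc_self ht))
      (mem_of_superset hnhds fun t ht => (hS0 t ht).ne') (mem_of_superset hnhds hF)
      (mem_of_superset hnhds hS) (hg r hr)
  have hVc : ContinuousOn V (Icc a b) := fun t ht =>
    (hV t ht).hasDerivAt.continuousAt.continuousWithinAt
  have hVmono : StrictMonoOn V (Icc a b) := strictMonoOn_of_hasDerivWithinAt_pos (convex_Icc a b)
    hVc (fun t ht => (hV t (interior_subset ht)).hasDerivAt.hasDerivWithinAt)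
    (fun t ht => hS0 t (by rwa [interior_Icc] at ht))
  have himage : V '' Ioo a b = Ioo (V a) (V b) := hVc.image_Ioo_of_strictMonoOn hab hVmono
  rw [convexOn_iff_deriv2_nonneg (convex_Ioo _ _) isOpen_Ioo, ← himage, forall_mem_image]
  · refine forall₂_congr fun r hr => ?_
    rw [Function.iterate_succ_apply, Function.iterate_one, (hF2 r hr).2.deriv,
      le_div_iff₀ (hS0 r hr), zero_mul]
  · rw [← himage, forall_mem_image]
    exact fun r hr => (hF2 r hr).1.self_of_nhds.differentiableAt
  · rw [← himage, forall_mem_image]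
    exact fun r hr => (hF2 r hr).2.differentiableAt

end CompEqDeriv

/-- In `ℝⁿ` with radial simple density `e^{φ(r)}`, the function `F`
sending ball volume `V(r)` to sphere surface area `S(r)` is twice differentiable at
`V(r)` with `F''(V(r)) = (φ''(r) - (n-1)/r²)/S(r)` wherever `φ` is twice differentiable;
consequently, if `φ` is twice continuously differentiable on `(a,b) ⊆ (0,∞)`, then `F`
is convex on `(V(a), V(b))` iff `φ''(r) ≥ (n-1)/r²` on `(a,b)`. -/
theorem stmt_9 (n : ℕ) (hn : 2 ≤ n) (φ : ℝ → ℝ)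
    (hφc : ContinuousOn φ (Set.Ioi 0))
    (hint : ∀ r > (0:ℝ),
      IntegrableOn (fun t => t ^ (n - 1) * Real.exp (φ t)) (Set.Ioc 0 r))
    (V S F : ℝ → ℝ)
    (hV : ∀ r : ℝ, V r = ∫ t in Set.Ioc 0 r, t ^ (n - 1) * Real.exp (φ t))
    (hS : ∀ r : ℝ, S r = r ^ (n - 1) * Real.exp (φ r))
    (hF : ∀ r > (0:ℝ), F (V r) = S r) :
    (∀ (r d₂ : ℝ) (ψ' : ℝ → ℝ), 0 < r →
      (∀ᶠ t in nhds r, HasDerivAt φ (ψ' t) t) → HasDerivAt ψ' d₂ r →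
      ∃ F' : ℝ → ℝ, (∀ᶠ v in nhds (V r), HasDerivAt F (F' v) v) ∧
        HasDerivAt F' ((d₂ - ((n : ℝ) - 1) / r ^ 2) / S r) (V r)) ∧
    (∀ (a b : ℝ) (ψ' ψ'' : ℝ → ℝ), 0 < a → a < b →
      (∀ t ∈ Set.Ioo a b, HasDerivAt φ (ψ' t) t) →
      (∀ t ∈ Set.Ioo a b, HasDerivAt ψ' (ψ'' t) t) →
      ContinuousOn ψ'' (Set.Ioo a b) →
      (ConvexOn ℝ (Set.Ioo (V a) (V b)) F ↔
        ∀ r ∈ Set.Ioo a b, ((n : ℝ) - 1) / r ^ 2 ≤ ψ'' r)) := by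
  have hVd : ∀ t > 0, HasStrictDerivAt V (S t) t := fun t ht => by
    rw [funext hV, hS]
    exact hasStrictDerivAt_integral_Ioc_zero (by fun_prop) hint ht
  have hS0 : ∀ t > 0, 0 < S t := fun t _ => by rw [hS]; positivity
  have hSd : ∀ t > 0, ∀ φ', HasDerivAt φ φ' t →
      HasDerivAt S (S t * (((n : ℝ) - 1) / t + φ')) t := fun t ht φ' hφ => by
    rw [funext hS, ← Nat.cast_pred (by omega)]
    exact hφ.pow_mul_exp ht.ne' (n - 1)
  refine ⟨fun r d₂ ψ' hr hψ hψ' => ⟨deriv F, ?_⟩, fun a b ψ' ψ'' ha hab hψ hψ' _ => ?_⟩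
  · have hpos : ∀ᶠ t in 𝓝 r, 0 < t := Ioi_mem_nhds hr
    exact hasDerivAt_deriv_of_comp_eq_deriv (hpos.mono hVd) (hpos.mono fun t ht => (hS0 t ht).ne')
      (hpos.mono hF) ((hpos.and hψ).mono fun t ht => hSd t ht.1 _ ht.2)
      (hψ'.const_div_add hr.ne' _)
  · have hpos : ∀ t ∈ Icc a b, 0 < t := fun t ht => ha.trans_le ht.1
    have hpos' : ∀ t ∈ Ioo a b, 0 < t := fun t ht => hpos t (Ioo_subset_Icc_self ht)
    rw [convexOn_Ioo_iff_of_comp_eq_deriv hab.le (fun t ht => hVd t (hpos t ht))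
      (fun t ht => hS0 t (hpos' t ht)) (fun t ht => hF t (hpos' t ht))
      (fun t ht => hSd t (hpos' t ht) _ (hψ t ht))
      (fun t ht => (hψ' t ht).const_div_add (hpos' t ht).ne' _)]
    exact forall₂_congr fun r _ => sub_nonneg
end

section
/- Let φ : (0,∞) → ℝ be twice continuously differentiable, define P(r) = 2π r e^{φ(r)} and A(r) = ∫₀^r 2π t e^{2φ(t)} dt (assumed finite for all r > 0), and let 0 < a < b. Then P ∘ A^{−1} is convex on (A(a), A(b)) if and only if φ″(r) ≥ φ′(r)² + φ′(r)/r + 1/r² for all r ∈ (a,b). -/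
/-!
The circle of radius `r` has `P'(r) / A'(r) = κ(r) := (1/r + φ'(r)) e^{-φ(r)}`, its geodesic
curvature. Since `A` is an increasing bijection `(a, b) → (A a, A b)`, the derivative of
`F = P ∘ A⁻¹` at `A r` is `κ(r)`, so `F` is convex iff `κ` is nondecreasing on `(a, b)`,
i.e. iff `κ' = (φ'' - φ'² - φ'/r - 1/r²) e^{-φ} ≥ 0` there.
-/

open MeasureTheory Filter Set Function Topology Real

theorem StrictMonoOn.monotoneOn_image_iff {α β γ : Type*} [LinearOrder α] [LinearOrder β]
    [Preorder γ] {e : α → β} {s : Set α} {f : β → γ} {g : α → γ} (he : StrictMonoOn e s)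
    (hfg : ∀ x ∈ s, f (e x) = g x) : MonotoneOn f (e '' s) ↔ MonotoneOn g s := by
  constructor
  · intro hf x hx y hy hxy
    rw [← hfg x hx, ← hfg y hy]
    exact hf (mem_image_of_mem e hx) (mem_image_of_mem e hy) (he.monotoneOn hx hy hxy)
  · rintro hg _ ⟨x, hx, rfl⟩ _ ⟨y, hy, rfl⟩ hxy
    rw [hfg x hx, hfg y hy]
    exact hg hx hy ((he.le_iff_le hx hy).1 hxy)

theorem monotoneOn_iff_forall_hasDerivAt_nonneg {f f' : ℝ → ℝ} {s : Set ℝ} (hs : IsOpen s)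
    (hc : Convex ℝ s) (hf : ∀ x ∈ s, HasDerivAt f (f' x) x) :
    MonotoneOn f s ↔ ∀ x ∈ s, 0 ≤ f' x := by
  constructor
  · intro hmono x hx
    have hacc : AccPt x (𝓟 (s ∩ univ)) :=
      (PerfectSpace.univ_preperfect x (mem_univ x)).nhds_inter (hs.mem_nhds hx)
    rw [inter_univ] at hacc
    exact (hf x hx).hasDerivWithinAt.nonneg_of_monotoneOn hacc hmono
  · intro hnonneg
    refine monotoneOn_of_deriv_nonneg hc
      (fun x hx => (hf x hx).continuousAt.continuousWithinAt) ?_ ?_ <;> rw [hs.interior_eq]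
    · exact fun x hx => (hf x hx).differentiableAt.differentiableWithinAt
    · exact fun x hx => (hf x hx).deriv ▸ hnonneg x hx

theorem convexOn_iff_monotoneOn_deriv {f : ℝ → ℝ} {s : Set ℝ} (hs : IsOpen s) (hc : Convex ℝ s)
    (hf : ∀ x ∈ s, DifferentiableAt ℝ f x) : ConvexOn ℝ s f ↔ MonotoneOn (deriv f) s := by
  refine ⟨fun hconv => hconv.monotoneOn_deriv hf, fun hmono => ?_⟩
  refine MonotoneOn.convexOn_of_deriv hc (fun x hx => (hf x hx).continuousAt.continuousWithinAt)
    ?_ (hs.interior_eq.symm ▸ hmono)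
  rw [hs.interior_eq]
  exact fun x hx => (hf x hx).differentiableWithinAt

theorem hasDerivAt_of_comp_strictMonoOn {F A P : ℝ → ℝ} {s : Set ℝ} {r a' p' : ℝ}
    (hs : s ∈ 𝓝 r) (hmono : StrictMonoOn A s) (himage : A '' s ∈ 𝓝 (A r))
    (hA : HasDerivAt A a' r) (ha' : a' ≠ 0) (hP : HasDerivAt P p' r)
    (hF : ∀ x ∈ s, F (A x) = P x) : HasDerivAt F (p' / a') (A r) := by
  set ρ := invFunOn A s
  have hr : r ∈ s := mem_of_mem_nhds hs
  have hρA : ∀ x ∈ s, ρ (A x) = x := fun x hx => hmono.injOn.leftInvOn_invFunOn hx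
  have hρmono : StrictMonoOn ρ (A '' s) := by
    rintro _ ⟨x, hx, rfl⟩ _ ⟨y, hy, rfl⟩ hxy
    rw [hρA x hx, hρA y hy]
    exact (hmono.lt_iff_lt hx hy).1 hxy
  have hρcont : ContinuousAt ρ (A r) := by
    refine hρmono.continuousAt_of_image_mem_nhds himage ?_
    rw [hρA r hr]
    exact mem_of_superset hs fun x hx => ⟨A x, mem_image_of_mem A hx, hρA x hx⟩
  have hρ : HasDerivAt ρ a'⁻¹ (A r) := by
    refine HasDerivAt.of_local_left_inverse (f := A) hρcont ?_ ha' ?_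
    · rwa [hρA r hr]
    · filter_upwards [himage] with y hy using invFunOn_eq hy
  rw [div_eq_mul_inv]
  refine ((hρA r hr).symm ▸ hP).comp (A r) hρ |>.congr_of_eventuallyEq ?_
  filter_upwards [himage] with y hy
  exact (congrArg F (invFunOn_eq hy)).symm.trans (hF (ρ y) (invFunOn_mem hy))

theorem hasDerivAt_of_forall_eq_setIntegral_Ioc {f A : ℝ → ℝ} {c r : ℝ}
    (hf : ContinuousOn f (Ioi c)) (hint : IntegrableOn f (Ioc c r))
    (hA : ∀ x > c, A x = ∫ t in Ioc c x, f t) (hr : c < r) : HasDerivAt A (f r) r := by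
  have hFTC : HasDerivAt (fun x => ∫ t in c..x, f t) (f r) r :=
    intervalIntegral.integral_hasDerivAt_right
      ((intervalIntegrable_iff_integrableOn_Ioc_of_le hr.le).mpr hint)
      (hf.stronglyMeasurableAtFilter isOpen_Ioi r hr) (hf.continuousAt (isOpen_Ioi.mem_nhds hr))
  refine hFTC.congr_of_eventuallyEq ?_
  filter_upwards [isOpen_Ioi.mem_nhds hr] with x (hx : c < x)
  rw [hA x hx, intervalIntegral.integral_of_le hx.le]

/-- The geodesic curvature of the circle of radius `r` in the metric `e^{φ} ds`,
where `φ'` stands for the derivative of `φ`. -/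
noncomputable def circleCurvature (φ φ' : ℝ → ℝ) (r : ℝ) : ℝ := (r⁻¹ + φ' r) * exp (-φ r)

section CircleCurvature

variable {φ φ' : ℝ → ℝ} {r : ℝ}

theorem hasDerivAt_circlePerimeter (hφ : HasDerivAt φ (φ' r) r) (hr : r ≠ 0) :
    HasDerivAt (fun t => 2 * π * t * exp (φ t))
      (circleCurvature φ φ' r * (2 * π * r * exp (2 * φ r))) r := by
  have hlin : HasDerivAt (fun t : ℝ => 2 * π * t) (2 * π) r := by
    simpa using (hasDerivAt_id r).const_mul (2 * π)
  refine (hlin.mul hφ.exp).congr_deriv ?_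
  rw [circleCurvature, two_mul (φ r), exp_add, exp_neg]
  field_simp

theorem hasDerivAt_circleCurvature {φ'' : ℝ} (hφ : HasDerivAt φ (φ' r) r)
    (hφ' : HasDerivAt φ' φ'' r) (hr : r ≠ 0) :
    HasDerivAt (circleCurvature φ φ')
      ((φ'' - (φ' r ^ 2 + φ' r / r + 1 / r ^ 2)) * exp (-φ r)) r := by
  refine (((hasDerivAt_inv hr).add hφ').mul hφ.neg.exp).congr_deriv ?_
  simp only [Pi.add_apply, Pi.neg_apply]
  field_simp
  ring

end CircleCurvature

theorem stmt_16_general (φ φ' φ'' : ℝ → ℝ)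
    (hφ' : ∀ r > (0:ℝ), HasDerivAt φ (φ' r) r)
    (hφ'' : ∀ r > (0:ℝ), HasDerivAt φ' (φ'' r) r)
    (P A F : ℝ → ℝ)
    (hP : ∀ r : ℝ, P r = 2 * Real.pi * r * Real.exp (φ r))
    (hint : ∀ r > (0:ℝ),
      IntegrableOn (fun t => 2 * Real.pi * t * Real.exp (2 * φ t)) (Set.Ioc 0 r))
    (hA : ∀ r > (0:ℝ), A r = ∫ t in Set.Ioc 0 r, 2 * Real.pi * t * Real.exp (2 * φ t))
    (hF : ∀ r > (0:ℝ), F (A r) = P r)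
    (a b : ℝ) (ha : 0 < a) (hab : a < b) :
    ConvexOn ℝ (Set.Ioo (A a) (A b)) F ↔
      ∀ r ∈ Set.Ioo a b, φ' r ^ 2 + φ' r / r + 1 / r ^ 2 ≤ φ'' r := by
  have hpos : Ioo a b ⊆ Ioi 0 := fun r hr => ha.trans hr.1
  have hφc : ContinuousOn φ (Ioi 0) := fun r hr => (hφ' r hr).continuousAt.continuousWithinAt
  have hA'pos : ∀ r > 0, 0 < 2 * π * r * exp (2 * φ r) := fun r hr => by positivity
  have hAd : ∀ r > 0, HasDerivAt A (2 * π * r * exp (2 * φ r)) r := fun r hr =>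
    hasDerivAt_of_forall_eq_setIntegral_Ioc (by fun_prop) (hint r hr) hA hr
  have hAmono : StrictMonoOn A (Ioi 0) := by
    refine strictMonoOn_of_deriv_pos (convex_Ioi 0)
      (fun r hr => (hAd r hr).continuousAt.continuousWithinAt) fun r hr => ?_
    rw [interior_Ioi] at hr
    rw [(hAd r hr).deriv]
    exact hA'pos r hr
  have himage : A '' Ioo a b = Ioo (A a) (A b) :=
    ContinuousOn.image_Ioo_of_strictMonoOn hab.le
      (fun r hr => (hAd r (ha.trans_le hr.1)).continuousAt.continuousWithinAt)
      (hAmono.mono fun r hr => ha.trans_le hr.1)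
  have hFd : ∀ r ∈ Ioo a b, HasDerivAt F (circleCurvature φ φ' r) (A r) := fun r hr => by
    have hAr : A '' Ioo a b ∈ 𝓝 (A r) := by
      rw [himage]
      exact isOpen_Ioo.mem_nhds (himage ▸ mem_image_of_mem A hr)
    have hr0 : 0 < r := hpos hr
    have hκ := hasDerivAt_of_comp_strictMonoOn (isOpen_Ioo.mem_nhds hr) (hAmono.mono hpos) hAr
      (hAd r hr0) (hA'pos r hr0).ne' (hasDerivAt_circlePerimeter (hφ' r hr0) hr0.ne')
      fun x hx => (hF x (hpos hx)).trans (hP x)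
    rwa [mul_div_cancel_right₀ _ (hA'pos r hr0).ne'] at hκ
  rw [← himage, convexOn_iff_monotoneOn_deriv (himage ▸ isOpen_Ioo) (himage ▸ convex_Ioo _ _)
      (by rintro _ ⟨r, hr, rfl⟩; exact (hFd r hr).differentiableAt),
    (hAmono.mono hpos).monotoneOn_image_iff fun r hr => (hFd r hr).deriv,
    monotoneOn_iff_forall_hasDerivAt_nonneg isOpen_Ioo (convex_Ioo a b) fun r hr =>
      hasDerivAt_circleCurvature (hφ' r (hpos hr)) (hφ'' r (hpos hr)) (hpos hr).ne']
  exact forall₂_congr fun r _ => by rw [mul_nonneg_iff_of_pos_right (exp_pos _), sub_nonneg]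

/-- In `ℝ² ∖ {0}` with conformal metric `e^{φ(r)} ds`, the perimeter
of circles `P(r) = 2π r e^{φ(r)}` as a function of the enclosed area
`A(r) = ∫₀^r 2π t e^{2φ(t)} dt` is convex on `(A(a), A(b))` iff
`φ''(r) ≥ φ'(r)² + φ'(r)/r + 1/r²` on `(a,b)`. -/
theorem stmt_16 (φ φ' φ'' : ℝ → ℝ)
    (hφ' : ∀ r > (0:ℝ), HasDerivAt φ (φ' r) r)
    (hφ'' : ∀ r > (0:ℝ), HasDerivAt φ' (φ'' r) r)
    (hφ''c : ContinuousOn φ'' (Set.Ioi 0))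
    (P A F : ℝ → ℝ)
    (hP : ∀ r : ℝ, P r = 2 * Real.pi * r * Real.exp (φ r))
    (hint : ∀ r > (0:ℝ),
      IntegrableOn (fun t => 2 * Real.pi * t * Real.exp (2 * φ t)) (Set.Ioc 0 r))
    (hA : ∀ r > (0:ℝ), A r = ∫ t in Set.Ioc 0 r, 2 * Real.pi * t * Real.exp (2 * φ t))
    (hF : ∀ r > (0:ℝ), F (A r) = P r)
    (a b : ℝ) (ha : 0 < a) (hab : a < b) :
    ConvexOn ℝ (Set.Ioo (A a) (A b)) F ↔
      ∀ r ∈ Set.Ioo a b, φ' r ^ 2 + φ' r / r + 1 / r ^ 2 ≤ φ'' r :=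
  stmt_16_general φ φ' φ'' hφ' hφ'' P A F hP hint hA hF a b ha hab
end

section
/- Let n ≥ 1. There is no continuous function Ψ : (0,∞) → (0,∞) satisfying all of the following: v(r) := ∫₀^r t^{n−1} Ψ(t) dt is finite for every r > 0; lim_{r→0⁺} r^{n−1} Ψ(r) = 0; and there exists a convex function F on the interval v((0,∞)) with r^{n−1} Ψ(r) = F(v(r)) for all r > 0. -/
/-!
Write `f r = r ^ (n - 1) * Ψ r` and `v r = ∫₀^r f`. As `r → 0⁺` both `v r → 0` and
`F (v r) = f r → 0`, so letting the left endpoint of a secant of the convex `F` tend to `0`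
gives `F x ≤ (x / b) F b`, i.e. `f ≤ K v` near `0`. Integrating, `v r ≤ K r v r`, which forces
`v r = 0` once `K r < 1`, although `v > 0`.
-/

open MeasureTheory Filter Set Topology

theorem ConvexOn.le_div_mul_of_tendsto_zero {ι : Type*} {l : Filter ι} [l.NeBot]
    {s : Set ℝ} {a : ι → ℝ} {F : ℝ → ℝ} (hF : ConvexOn ℝ s F)
    (has : ∀ᶠ i in l, a i ∈ s) (ha : Tendsto a l (𝓝 0)) (hFa : Tendsto (F ∘ a) l (𝓝 0))
    {x b : ℝ} (hb : b ∈ s) (hx0 : 0 < x) (hxb : x ≤ b) :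
    F x ≤ x / b * F b := by
  rcases hxb.eq_or_lt with rfl | hxb
  · rw [div_self hx0.ne', one_mul]
  have secant : ∀ᶠ i in l, F x ≤ ((b - x) * F (a i) + (x - a i) * F b) / (b - a i) := by
    filter_upwards [has, ha.eventually (gt_mem_nhds hx0)] with i hai hax
    rw [le_div_iff₀ (by linarith), mul_comm]
    exact hF.secant_mono_aux1 hai hb hax hxb
  have lim := ((hFa.const_mul (b - x)).add ((tendsto_const_nhds (x := x)).sub ha |>.mul_const
    (F b))).div ((tendsto_const_nhds (x := b)).sub ha) (by linarith : b - 0 ≠ 0)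
  calc F x ≤ ((b - x) * 0 + (x - 0) * F b) / (b - 0) := ge_of_tendsto lim secant
    _ = x / b * F b := by ring

theorem setIntegral_Ioc_eq_zero_of_le_mul {f : ℝ → ℝ} {K a r : ℝ} (hK : 0 ≤ K)
    (hKr : K * (r - a) < 1) (hf : IntegrableOn f (Ioc a r)) (hf0 : ∀ t ∈ Ioc a r, 0 ≤ f t)
    (hfK : ∀ t ∈ Ioc a r, f t ≤ K * ∫ u in Ioc a t, f u) :
    ∫ t in Ioc a r, f t = 0 := by
  rcases le_total r a with hra | har
  · rw [Ioc_eq_empty hra.not_gt, Measure.restrict_empty, integral_zero_measure]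
  set V := ∫ t in Ioc a r, f t
  have hV0 : 0 ≤ V := setIntegral_nonneg measurableSet_Ioc hf0
  have hf0_ae : 0 ≤ᵐ[volume.restrict (Ioc a r)] f :=
    ae_restrict_of_forall_mem measurableSet_Ioc hf0
  have partial_le : ∀ t ∈ Ioc a r, ∫ u in Ioc a t, f u ≤ V := fun t ht =>
    setIntegral_mono_set hf hf0_ae (Ioc_subset_Ioc_right ht.2).eventuallyLE
  have : V ≤ K * V * (r - a) :=
    calc V ≤ ∫ _ in Ioc a r, K * V :=
          setIntegral_mono_on hf (integrableOn_const measure_Ioc_lt_top.ne) measurableSet_Ioc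
            fun t ht => (hfK t ht).trans (mul_le_mul_of_nonneg_left (partial_le t ht) hK)
      _ = K * V * (r - a) := by
          rw [setIntegral_const, Real.volume_real_Ioc_of_le har, smul_eq_mul, mul_comm]
  nlinarith

theorem setIntegral_Ioc_pos {f : ℝ → ℝ} {a r : ℝ} (har : a < r) (hf : IntegrableOn f (Ioc a r))
    (hf0 : ∀ t ∈ Ioc a r, 0 < f t) : 0 < ∫ t in Ioc a r, f t := by
  simpa only [intervalIntegral.integral_of_le har.le] using
    intervalIntegral.intervalIntegral_pos_of_pos_on
      ((intervalIntegrable_iff_integrableOn_Ioc_of_le har.le).mpr hf)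
      (fun t ht => hf0 t (Ioo_subset_Ioc_self ht)) har

theorem tendsto_setIntegral_Ioc_nhdsGT {f : ℝ → ℝ} {a b : ℝ} (hab : a < b)
    (hf : IntegrableOn f (Ioc a b)) :
    Tendsto (fun r => ∫ t in Ioc a r, f t) (𝓝[>] a) (𝓝 0) := by
  have hcont := intervalIntegral.continuousOn_primitive
    ((integrableOn_Icc_iff_integrableOn_Ioc).mpr hf) a (left_mem_Icc.mpr hab.le)
  have := (hcont.mono Ioo_subset_Icc_self).tendsto
  rwa [nhdsWithin_Ioo_eq_nhdsGT hab, Ioc_self, Measure.restrict_empty, integral_zero_measure]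
    at this

theorem stmt_17_general (n : ℕ) :
    ¬ ∃ (Ψ F : ℝ → ℝ),
      ContinuousOn Ψ (Set.Ioi 0) ∧ (∀ r > (0:ℝ), 0 < Ψ r) ∧
      (∀ r > (0:ℝ), IntegrableOn (fun t => t ^ (n - 1) * Ψ t) (Set.Ioc 0 r)) ∧
      Tendsto (fun r => r ^ (n - 1) * Ψ r) (nhdsWithin 0 (Set.Ioi 0)) (nhds 0) ∧
      ConvexOn ℝ ((fun r => ∫ t in Set.Ioc 0 r, t ^ (n - 1) * Ψ t) '' Set.Ioi 0) F ∧
      (∀ r > (0:ℝ), r ^ (n - 1) * Ψ r = F (∫ t in Set.Ioc 0 r, t ^ (n - 1) * Ψ t)) := by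
  rintro ⟨Ψ, F, -, hΨ, hint, htend, hconv, hF⟩
  set f : ℝ → ℝ := fun t => t ^ (n - 1) * Ψ t
  set v : ℝ → ℝ := fun r => ∫ t in Ioc 0 r, f t
  have hf : ∀ t > 0, 0 < f t := fun t ht => mul_pos (pow_pos ht _) (hΨ t ht)
  have hF' : ∀ r > 0, f r = F (v r) := hF
  have hv : ∀ r > 0, 0 < v r := fun r hr => setIntegral_Ioc_pos hr (hint r hr) fun t ht => hf t ht.1
  have hv0 : Tendsto v (𝓝[>] 0) (𝓝 0) :=
    tendsto_setIntegral_Ioc_nhdsGT one_pos (hint 1 one_pos)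
  set K := f 1 / v 1
  have hK : 0 < K := div_pos (hf 1 one_pos) (hv 1 one_pos)
  have hfK : ∀ t ∈ Ioc 0 1, f t ≤ K * v t := fun t ht => by
    have hvt : v t ≤ v 1 := setIntegral_mono_set (hint 1 one_pos)
      (ae_restrict_of_forall_mem measurableSet_Ioc fun u hu => (hf u hu.1).le)
      (Ioc_subset_Ioc_right ht.2).eventuallyLE
    have hFv : f =ᶠ[𝓝[>] 0] F ∘ v := eventually_mem_nhdsWithin.mono hF'
    calc f t = F (v t) := hF' t ht.1
      _ ≤ v t / v 1 * F (v 1) := hconv.le_div_mul_of_tendsto_zero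
          (eventually_mem_nhdsWithin.mono fun r hr => mem_image_of_mem v hr) hv0
          (htend.congr' hFv) (mem_image_of_mem v (mem_Ioi.mpr one_pos)) (hv t ht.1) hvt
      _ = K * v t := by rw [← hF' 1 one_pos, div_mul_comm]
  obtain ⟨r, hr, hKr⟩ : ∃ r ∈ Ioc (0 : ℝ) 1, K * (r - 0) < 1 :=
    ⟨1 / (K + 1), ⟨by positivity, (div_le_one (by positivity)).mpr (by linarith)⟩,
      by rw [sub_zero, mul_one_div, div_lt_one (by positivity)]; linarith⟩
  exact (hv r hr.1).ne' (setIntegral_Ioc_eq_zero_of_le_mul hK.le hKr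
    ((hint 1 one_pos).mono_set (Ioc_subset_Ioc_right hr.2)) (fun t ht => (hf t ht.1).le)
    fun t ht => hfK t ⟨ht.1, ht.2.trans hr.2⟩)

/-- There is no continuous simple radial density `Ψ : (0,∞) → (0,∞)`
with finite volume at the origin such that the sphere area `r ↦ r^{n-1} Ψ(r)` tends to
`0` at the origin while being a convex function of the ball volume
`v(r) = ∫₀^r t^{n-1} Ψ(t) dt`. -/
theorem stmt_17 (n : ℕ) (hn : 1 ≤ n) :
    ¬ ∃ (Ψ F : ℝ → ℝ),
      ContinuousOn Ψ (Set.Ioi 0) ∧ (∀ r > (0:ℝ), 0 < Ψ r) ∧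
      (∀ r > (0:ℝ), IntegrableOn (fun t => t ^ (n - 1) * Ψ t) (Set.Ioc 0 r)) ∧
      Tendsto (fun r => r ^ (n - 1) * Ψ r) (nhdsWithin 0 (Set.Ioi 0)) (nhds 0) ∧
      ConvexOn ℝ ((fun r => ∫ t in Set.Ioc 0 r, t ^ (n - 1) * Ψ t) '' Set.Ioi 0) F ∧
      (∀ r > (0:ℝ), r ^ (n - 1) * Ψ r = F (∫ t in Set.Ioc 0 r, t ^ (n - 1) * Ψ t)) :=
  stmt_17_general n
end

section
/- Let n ≥ 2, let m ≥ 0 and k ≥ m + 1 be real numbers, let σ denote the (n−1)-dimensional Hausdorff measure on the unit sphere S^{n−1} ⊂ ℝⁿ, and fix r₀ > 0. Then for every measurable u : S^{n−1} → (0,∞) such that θ ↦ ∫_{r₀}^{u(θ)} t^{n−1+m} dt is σ-integrable with ∫_{S^{n−1}} (∫_{r₀}^{u(θ)} t^{n−1+m} dt) dσ(θ) = 0, one has ∫_{S^{n−1}} u(θ)^{n−1+k} dσ(θ) ≥ r₀^{n−1+k} σ(S^{n−1}). -/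
open MeasureTheory Set

/-!
With `V(x) = ∫_{r₀}^x t^q dt` (`q = n-1+m`) and `A(x) = x^p` (`p = n-1+k`), the area `A` is a
convex function of the volume `V` because `p ≥ q + 1`. Its tangent line at the sphere `x = r₀`
gives `r₀^p + λ V(x) ≤ A(x)` for a constant `λ ≥ 0`; evaluating at `x = u θ` and integrating over
the sphere, the term `λ V(u θ)` integrates to zero.
-/

lemma Real.rpow_add_mul_rpow_sub_one_mul_sub_le {α a y : ℝ} (hα : 1 ≤ α) (ha : 0 < a)
    (hy : 0 ≤ y) : a ^ α + α * a ^ (α - 1) * (y - a) ≤ y ^ α := by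
  have hbern := one_add_mul_self_le_rpow_one_add
    (by have := div_nonneg hy ha.le; linarith : -1 ≤ y / a - 1) hα
  rw [add_sub_cancel, Real.div_rpow hy ha.le, le_div_iff₀ (Real.rpow_pos_of_pos ha α)] at hbern
  calc a ^ α + α * a ^ (α - 1) * (y - a) = (1 + α * (y / a - 1)) * a ^ α := by
        rw [Real.rpow_sub_one ha.ne']
        field_simp
    _ ≤ y ^ α := hbern

/-- The slope `p * r₀ ^ (p - (q + 1))` is the ratio of the derivatives of `x ^ p` and
`∫ t in r₀..x, t ^ q` at `x = r₀`. -/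
lemma rpow_add_mul_integral_rpow_le {p q r₀ x : ℝ} (hq : -1 < q) (hpq : q + 1 ≤ p)
    (hr₀ : 0 < r₀) (hx : 0 < x) :
    r₀ ^ p + p * r₀ ^ (p - (q + 1)) * ∫ t in r₀..x, t ^ q ≤ x ^ p := by
  have hQ : 0 < q + 1 := by linarith
  have hpow : ∀ y : ℝ, 0 < y → (y ^ (q + 1)) ^ (p / (q + 1)) = y ^ p := fun y hy => by
    rw [← Real.rpow_mul hy.le, mul_div_cancel₀ _ hQ.ne']
  have htangent := Real.rpow_add_mul_rpow_sub_one_mul_sub_le ((one_le_div hQ).2 hpq)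
    (Real.rpow_pos_of_pos hr₀ (q + 1)) (Real.rpow_nonneg hx.le (q + 1))
  rw [hpow r₀ hr₀, hpow x hx, ← Real.rpow_mul hr₀.le, mul_sub_one, mul_div_cancel₀ _ hQ.ne']
    at htangent
  rw [integral_rpow (Or.inl hq)]
  calc r₀ ^ p + p * r₀ ^ (p - (q + 1)) * ((x ^ (q + 1) - r₀ ^ (q + 1)) / (q + 1))
      = r₀ ^ p + p / (q + 1) * r₀ ^ (p - (q + 1)) * (x ^ (q + 1) - r₀ ^ (q + 1)) := by ring
    _ ≤ x ^ p := htangent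

lemma lintegral_ofReal_eq_lintegral_ofReal_neg {α : Type*} [MeasurableSpace α] {μ : Measure α}
    {w : α → ℝ} (hw : Integrable w μ) (hw0 : ∫ x, w x ∂μ = 0) :
    ∫⁻ x, ENNReal.ofReal (w x) ∂μ = ∫⁻ x, ENNReal.ofReal (-w x) ∂μ := by
  have hsplit := integral_eq_lintegral_pos_part_sub_lintegral_neg_part hw
  rw [hw0, eq_comm, sub_eq_zero] at hsplit
  exact (ENNReal.toReal_eq_toReal_iff' hw.lintegral_lt_top.ne hw.neg.lintegral_lt_top.ne).1 hsplit

/-- `c + w ≤ f` with the negative part of `w` moved across, so that no subtraction occurs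
in `ℝ≥0∞`. -/
lemma ENNReal.ofReal_add_ofReal_le_ofReal_add_ofReal_neg {c w f : ℝ} (hc : 0 ≤ c)
    (h : c + w ≤ f) :
    ENNReal.ofReal c + ENNReal.ofReal w ≤ ENNReal.ofReal f + ENNReal.ofReal (-w) := by
  rcases le_total 0 w with hw | hw
  · rw [← ENNReal.ofReal_add hc hw]
    exact (ENNReal.ofReal_le_ofReal h).trans le_self_add
  · rw [ENNReal.ofReal_eq_zero.2 hw, add_zero]
    calc ENNReal.ofReal c ≤ ENNReal.ofReal (f + -w) := ENNReal.ofReal_le_ofReal (by linarith)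
      _ ≤ ENNReal.ofReal f + ENNReal.ofReal (-w) := ENNReal.ofReal_add_le

lemma ofReal_mul_measure_univ_le_lintegral_of_add_le {α : Type*} [MeasurableSpace α]
    {μ : Measure α} {c : ℝ} {f w : α → ℝ} (hf : AEMeasurable f μ) (hw : Integrable w μ)
    (hw0 : ∫ x, w x ∂μ = 0) (hle : ∀ᵐ x ∂μ, c + w x ≤ f x) :
    ENNReal.ofReal c * μ univ ≤ ∫⁻ x, ENNReal.ofReal (f x) ∂μ := by
  rcases le_or_gt c 0 with hc | hc
  · simp [ENNReal.ofReal_eq_zero.2 hc]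
  have hneg_ne_top := hw.neg.lintegral_lt_top.ne
  have hmono : ∫⁻ x, (ENNReal.ofReal c + ENNReal.ofReal (w x)) ∂μ ≤
      ∫⁻ x, (ENNReal.ofReal (f x) + ENNReal.ofReal (-w x)) ∂μ :=
    lintegral_mono_ae <| hle.mono fun x hx =>
      ENNReal.ofReal_add_ofReal_le_ofReal_add_ofReal_neg hc.le hx
  rw [lintegral_add_left measurable_const, lintegral_const,
    lintegral_add_left' hf.ennreal_ofReal, lintegral_ofReal_eq_lintegral_ofReal_neg hw hw0]
    at hmono
  exact (ENNReal.add_le_add_iff_right hneg_ne_top).1 hmono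

/-- In `ℝⁿ ∖ {0}` with volume density `r^m` and surface density `r^k`
(`m ≥ 0`, `k ≥ m+1`), the sphere of radius `r₀` minimizes tangential surface area among
boundaries of star-shaped regions `{tθ : 0 < t < u(θ)}` of the same weighted volume:
if `∫ (∫_{r₀}^{u θ} t^{n-1+m} dt) dσ = 0` then
`∫ u^{n-1+k} dσ ≥ r₀^{n-1+k} σ(S^{n-1})`. -/
theorem stmt_18 (n : ℕ) (hn : 2 ≤ n) (m k : ℝ) (hm : 0 ≤ m) (hk : m + 1 ≤ k)
    (r₀ : ℝ) (hr₀ : 0 < r₀)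
    (u : EuclideanSpace ℝ (Fin n) → ℝ) (hu : Measurable u)
    (hupos : ∀ θ ∈ Metric.sphere (0 : EuclideanSpace ℝ (Fin n)) 1, 0 < u θ)
    (hwu : IntegrableOn (fun θ => ∫ t in r₀..u θ, t ^ ((n : ℝ) - 1 + m))
      (Metric.sphere (0 : EuclideanSpace ℝ (Fin n)) 1) (μH[(n : ℝ) - 1]))
    (hwu0 : ∫ θ in Metric.sphere (0 : EuclideanSpace ℝ (Fin n)) 1,
      (∫ t in r₀..u θ, t ^ ((n : ℝ) - 1 + m)) ∂(μH[(n : ℝ) - 1]) = 0) :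
    ENNReal.ofReal (r₀ ^ ((n : ℝ) - 1 + k)) *
        μH[(n : ℝ) - 1] (Metric.sphere (0 : EuclideanSpace ℝ (Fin n)) 1) ≤
      ∫⁻ θ in Metric.sphere (0 : EuclideanSpace ℝ (Fin n)) 1,
        ENNReal.ofReal (u θ ^ ((n : ℝ) - 1 + k)) ∂(μH[(n : ℝ) - 1]) := by
  have hq : -1 < (n : ℝ) - 1 + m := by
    have : (2 : ℝ) ≤ n := by exact_mod_cast hn
    linarith
  have hpq : (n : ℝ) - 1 + m + 1 ≤ (n : ℝ) - 1 + k := by linarith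
  have hbound := ofReal_mul_measure_univ_le_lintegral_of_add_le
    (μ := μH[(n : ℝ) - 1].restrict (Metric.sphere 0 1)) (c := r₀ ^ ((n : ℝ) - 1 + k))
    (hu.pow_const _).aemeasurable (hwu.const_mul _)
    (by rw [integral_const_mul, hwu0, mul_zero])
    (ae_restrict_of_forall_mem Metric.isClosed_sphere.measurableSet fun θ hθ =>
      rpow_add_mul_integral_rpow_le hq hpq hr₀ (hupos θ hθ))
  rwa [Measure.restrict_apply_univ] at hbound
end

section
/- Let n ≥ 2, let p < −n, and let φ : (0,∞) → ℝ be twice continuously differentiable with φ″ ≥ 0 and φ′ ≤ 0. Let σ denote the (n−1)-dimensional Hausdorff measure on the unit sphere S^{n−1} ⊂ ℝⁿ, fix r₀ > 0, and set w(ρ) = ∫_{r₀}^{ρ} t^{n−1+p} e^{φ(t)} dt (finite for all ρ > 0). Then for every measurable u : S^{n−1} → (0,∞) with w ∘ u σ-integrable and ∫_{S^{n−1}} w(u(θ)) dσ(θ) = 0, one has ∫_{S^{n−1}} u(θ)^{n−1+p} e^{φ(u(θ))} dσ(θ) ≥ r₀^{n−1+p} e^{φ(r₀)} σ(S^{n−1}).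 -/
open MeasureTheory Filter Set
open scoped Interval

/-!
The sphere density `f(t) = t^a e^{φ(t)}`, `a = n - 1 + p < 0`, is log-convex, since
`(log f)' = a/t + φ'` is increasing. Its graph therefore lies above its tangent line as a function
of the enclosed weighted volume `w = ∫_{r₀} f`: `f(ρ) ≥ f(r₀) + (log f)'(r₀) · w(ρ)`.
Integrating this over the sphere at `ρ = u(θ)` and using `∫ w ∘ u = 0` gives the claim.
-/

theorem le_of_hasDerivAt_of_nonneg_of_nonpos {F F' : ℝ → ℝ} {a b : ℝ}
    (hF : ∀ x ∈ [[a, b]], HasDerivAt F (F' x) x) (hright : ∀ x ∈ Ioo a b, 0 ≤ F' x)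
    (hleft : ∀ x ∈ Ioo b a, F' x ≤ 0) : F a ≤ F b := by
  have hFc : ContinuousOn F [[a, b]] := fun x hx => (hF x hx).continuousAt.continuousWithinAt
  rcases le_total a b with hab | hba
  · refine monotoneOn_of_hasDerivWithinAt_nonneg (f' := F') (convex_Icc a b)
      (hFc.mono Icc_subset_uIcc) ?_ ?_ (left_mem_Icc.2 hab) (right_mem_Icc.2 hab) hab <;>
      rw [interior_Icc]
    · exact fun x hx => (hF x (Icc_subset_uIcc (Ioo_subset_Icc_self hx))).hasDerivWithinAt
    · exact hright
  · refine antitoneOn_of_hasDerivWithinAt_nonpos (f' := F') (convex_Icc b a)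
      (hFc.mono Icc_subset_uIcc') ?_ ?_ (left_mem_Icc.2 hba) (right_mem_Icc.2 hba) hba <;>
      rw [interior_Icc]
    · exact fun x hx => (hF x (Icc_subset_uIcc' (Ioo_subset_Icc_self hx))).hasDerivWithinAt
    · exact hleft

/-- A nonnegative `f` with monotone logarithmic derivative `g` lies above its tangent line at `r₀`
when viewed as a function of `W(x) = ∫_{r₀}^x f`: the slope there is `f'(r₀) / W'(r₀) = g r₀`. -/
theorem add_mul_integral_le_of_hasDerivAt_mul_self {s : Set ℝ} {f g : ℝ → ℝ} {r₀ ρ : ℝ}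
    (hs : IsOpen s) (hr₀ρ : [[r₀, ρ]] ⊆ s) (hf : ∀ x ∈ s, HasDerivAt f (g x * f x) x)
    (hf₀ : ∀ x ∈ s, 0 ≤ f x) (hg : MonotoneOn g s) :
    f r₀ + g r₀ * ∫ x in r₀..ρ, f x ≤ f ρ := by
  have hfc : ContinuousOn f s := fun x hx => (hf x hx).continuousAt.continuousWithinAt
  set F : ℝ → ℝ := fun x => f x - g r₀ * ∫ t in r₀..x, f t
  have hF : ∀ x ∈ [[r₀, ρ]], HasDerivAt F ((g x - g r₀) * f x) x := by
    intro x hx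
    have hxs := hr₀ρ hx
    have hW : HasDerivAt (fun y => ∫ t in r₀..y, f t) (f x) x :=
      intervalIntegral.integral_hasDerivAt_right
        ((hfc.mono ((uIcc_subset_uIcc_left hx).trans hr₀ρ)).intervalIntegrable)
        (hfc.stronglyMeasurableAtFilter hs x hxs) (hfc.continuousAt (hs.mem_nhds hxs))
    exact ((hf x hxs).sub (hW.const_mul (g r₀))).congr_deriv (by ring)
  have hr₀s : r₀ ∈ s := hr₀ρ left_mem_uIcc
  have hFr₀ρ : F r₀ ≤ F ρ := by
    refine le_of_hasDerivAt_of_nonneg_of_nonpos hF (fun x hx => ?_) (fun x hx => ?_)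
    · have hxs : x ∈ s := hr₀ρ (Icc_subset_uIcc (Ioo_subset_Icc_self hx))
      exact mul_nonneg (sub_nonneg.2 (hg hr₀s hxs hx.1.le)) (hf₀ x hxs)
    · have hxs : x ∈ s := hr₀ρ (Icc_subset_uIcc' (Ioo_subset_Icc_self hx))
      exact mul_nonpos_of_nonpos_of_nonneg (sub_nonpos.2 (hg hxs hr₀s hx.2.le)) (hf₀ x hxs)
  simp only [F, intervalIntegral.integral_same, mul_zero, sub_zero] at hFr₀ρ
  linarith

theorem hasDerivAt_rpow_mul_exp_comp {φ : ℝ → ℝ} {φ' a x : ℝ} (hx : 0 < x)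
    (hφ : HasDerivAt φ φ' x) :
    HasDerivAt (fun t => t ^ a * Real.exp (φ t)) ((a / x + φ') * (x ^ a * Real.exp (φ x))) x := by
  refine ((Real.hasDerivAt_rpow_const (p := a) (Or.inl hx.ne')).mul hφ.exp).congr_deriv ?_
  rw [Real.rpow_sub_one hx.ne']
  field_simp

theorem monotoneOn_div_add {a : ℝ} {φ' φ'' : ℝ → ℝ} (ha : a ≤ 0)
    (hφ' : ∀ x > 0, HasDerivAt φ' (φ'' x) x) (hφ'' : ∀ x > 0, 0 ≤ φ'' x) :
    MonotoneOn (fun x => a / x + φ' x) (Ioi 0) := by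
  have hdiv : MonotoneOn (fun x : ℝ => a / x) (Ioi 0) := fun x hx y _ hxy => by
    simpa only [div_eq_mul_inv] using
      mul_le_mul_of_nonpos_left (inv_anti₀ (mem_Ioi.1 hx) hxy) ha
  refine hdiv.add (monotoneOn_of_deriv_nonneg (convex_Ioi 0)
    (fun x hx => (hφ' x hx).continuousAt.continuousWithinAt) ?_ ?_) <;> rw [interior_Ioi]
  · exact fun x hx => (hφ' x hx).differentiableAt.differentiableWithinAt
  · exact fun x hx => (hφ' x hx).deriv ▸ hφ'' x hx

/-- Pointwise `c + h⁺ ≤ F⁺ + h⁻`; the equal finite integrals of `h⁺` and `h⁻` then cancel, even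
when `μ` is infinite. -/
theorem ofReal_mul_measure_univ_le_lintegral {α : Type*} [MeasurableSpace α] {μ : Measure α}
    {c : ℝ} {h F : α → ℝ} (hc : 0 ≤ c) (hh : Integrable h μ) (hh₀ : ∫ x, h x ∂μ = 0)
    (hF : ∀ᵐ x ∂μ, c + h x ≤ F x) :
    ENNReal.ofReal c * μ univ ≤ ∫⁻ x, ENNReal.ofReal (F x) ∂μ := by
  have hpos : ∫⁻ x, ENNReal.ofReal (h x) ∂μ ≠ ⊤ := hh.lintegral_lt_top.ne
  have hparts : ∫⁻ x, ENNReal.ofReal (-h x) ∂μ = ∫⁻ x, ENNReal.ofReal (h x) ∂μ := by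
    rw [integral_eq_lintegral_pos_part_sub_lintegral_neg_part hh, sub_eq_zero] at hh₀
    exact (ENNReal.toReal_eq_toReal_iff' hh.neg.lintegral_lt_top.ne hpos).1 hh₀.symm
  refine ENNReal.le_of_add_le_add_right hpos ?_
  calc ENNReal.ofReal c * μ univ + ∫⁻ x, ENNReal.ofReal (h x) ∂μ
      = ∫⁻ x, ENNReal.ofReal c + ENNReal.ofReal (h x) ∂μ := by
        rw [lintegral_add_left measurable_const, lintegral_const]
    _ ≤ ∫⁻ x, ENNReal.ofReal (F x) + ENNReal.ofReal (-h x) ∂μ := by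
        refine lintegral_mono_ae (hF.mono fun x hx => ?_)
        rcases le_total 0 (h x) with hx₀ | hx₀
        · rw [ENNReal.ofReal_of_nonpos (neg_nonpos.2 hx₀), add_zero,
            ← ENNReal.ofReal_add hc hx₀]
          exact ENNReal.ofReal_le_ofReal hx
        · rw [ENNReal.ofReal_of_nonpos hx₀, add_zero]
          exact (ENNReal.ofReal_le_ofReal (by linarith)).trans ENNReal.ofReal_add_le
    _ = ∫⁻ x, ENNReal.ofReal (F x) ∂μ + ∫⁻ x, ENNReal.ofReal (h x) ∂μ := by
        have hneg : AEMeasurable (fun x => ENNReal.ofReal (-h x)) μ :=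
          hh.aemeasurable.neg.ennreal_ofReal
        rw [lintegral_add_right' _ hneg, hparts]

theorem stmt_19_general (n : ℕ) (p : ℝ) (hp : p < -(n : ℝ))
    (φ φ' φ'' : ℝ → ℝ)
    (hφ' : ∀ r > (0:ℝ), HasDerivAt φ (φ' r) r)
    (hφ'' : ∀ r > (0:ℝ), HasDerivAt φ' (φ'' r) r)
    (hφ''nn : ∀ r > (0:ℝ), 0 ≤ φ'' r)
    (r₀ : ℝ) (hr₀ : 0 < r₀)
    (w : ℝ → ℝ) (hw : ∀ ρ > (0:ℝ), w ρ = ∫ t in r₀..ρ, t ^ ((n : ℝ) - 1 + p) * Real.exp (φ t))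
    (u : EuclideanSpace ℝ (Fin n) → ℝ)
    (hupos : ∀ θ ∈ Metric.sphere (0 : EuclideanSpace ℝ (Fin n)) 1, 0 < u θ)
    (hwu : IntegrableOn (fun θ => w (u θ))
      (Metric.sphere (0 : EuclideanSpace ℝ (Fin n)) 1) (μH[(n : ℝ) - 1]))
    (hwu0 : ∫ θ in Metric.sphere (0 : EuclideanSpace ℝ (Fin n)) 1,
      w (u θ) ∂(μH[(n : ℝ) - 1]) = 0) :
    ENNReal.ofReal (r₀ ^ ((n : ℝ) - 1 + p) * Real.exp (φ r₀)) *
        μH[(n : ℝ) - 1] (Metric.sphere (0 : EuclideanSpace ℝ (Fin n)) 1) ≤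
      ∫⁻ θ in Metric.sphere (0 : EuclideanSpace ℝ (Fin n)) 1,
        ENNReal.ofReal (u θ ^ ((n : ℝ) - 1 + p) * Real.exp (φ (u θ)))
          ∂(μH[(n : ℝ) - 1]) := by
  set a : ℝ := (n : ℝ) - 1 + p
  have ha : a ≤ 0 := by simp only [a]; linarith [n.cast_nonneg (α := ℝ)]
  have htangent : ∀ ρ > 0, r₀ ^ a * Real.exp (φ r₀) + (a / r₀ + φ' r₀) * w ρ ≤
      ρ ^ a * Real.exp (φ ρ) := fun ρ hρ => hw ρ hρ ▸
    add_mul_integral_le_of_hasDerivAt_mul_self isOpen_Ioi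
      (ordConnected_Ioi.uIcc_subset hr₀ hρ)
      (fun x hx => hasDerivAt_rpow_mul_exp_comp hx (hφ' x hx))
      (fun x hx => by have : (0 : ℝ) < x := hx; positivity) (monotoneOn_div_add ha hφ'' hφ''nn)
  rw [← Measure.restrict_apply_univ]
  refine ofReal_mul_measure_univ_le_lintegral (by positivity) (hwu.const_mul (a / r₀ + φ' r₀))
    (by rw [integral_const_mul, hwu0, mul_zero]) ?_
  exact ae_restrict_of_forall_mem Metric.isClosed_sphere.measurableSet
    fun θ hθ => htangent _ (hupos θ hθ)

/-- In `ℝⁿ ∖ {0}` with simple density `r^p e^{φ(r)}`, `p < -n`, `φ`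
twice continuously differentiable with `φ'' ≥ 0` and `φ' ≤ 0`, the sphere of radius `r₀`
minimizes tangential surface area among boundaries of star-shaped regions enclosing the
same weighted volume: if `∫ w(u θ) dσ = 0` with
`w(ρ) = ∫_{r₀}^ρ t^{n-1+p} e^{φ(t)} dt`, then
`∫ u^{n-1+p} e^{φ∘u} dσ ≥ r₀^{n-1+p} e^{φ(r₀)} σ(S^{n-1})`. -/
theorem stmt_19 (n : ℕ) (hn : 2 ≤ n) (p : ℝ) (hp : p < -(n : ℝ))
    (φ φ' φ'' : ℝ → ℝ)
    (hφ' : ∀ r > (0:ℝ), HasDerivAt φ (φ' r) r)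
    (hφ'' : ∀ r > (0:ℝ), HasDerivAt φ' (φ'' r) r)
    (hφ''c : ContinuousOn φ'' (Set.Ioi 0))
    (hφ''nn : ∀ r > (0:ℝ), 0 ≤ φ'' r)
    (hφ'np : ∀ r > (0:ℝ), φ' r ≤ 0)
    (r₀ : ℝ) (hr₀ : 0 < r₀)
    (w : ℝ → ℝ) (hw : ∀ ρ > (0:ℝ), w ρ = ∫ t in r₀..ρ, t ^ ((n : ℝ) - 1 + p) * Real.exp (φ t))
    (hwint : ∀ ρ > (0:ℝ), IntervalIntegrable
      (fun t => t ^ ((n : ℝ) - 1 + p) * Real.exp (φ t)) volume r₀ ρ)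
    (u : EuclideanSpace ℝ (Fin n) → ℝ) (hu : Measurable u)
    (hupos : ∀ θ ∈ Metric.sphere (0 : EuclideanSpace ℝ (Fin n)) 1, 0 < u θ)
    (hwu : IntegrableOn (fun θ => w (u θ))
      (Metric.sphere (0 : EuclideanSpace ℝ (Fin n)) 1) (μH[(n : ℝ) - 1]))
    (hwu0 : ∫ θ in Metric.sphere (0 : EuclideanSpace ℝ (Fin n)) 1,
      w (u θ) ∂(μH[(n : ℝ) - 1]) = 0) :
    ENNReal.ofReal (r₀ ^ ((n : ℝ) - 1 + p) * Real.exp (φ r₀)) *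
        μH[(n : ℝ) - 1] (Metric.sphere (0 : EuclideanSpace ℝ (Fin n)) 1) ≤
      ∫⁻ θ in Metric.sphere (0 : EuclideanSpace ℝ (Fin n)) 1,
        ENNReal.ofReal (u θ ^ ((n : ℝ) - 1 + p) * Real.exp (φ (u θ)))
          ∂(μH[(n : ℝ) - 1]) :=
  stmt_19_general n p hp φ φ' φ'' hφ' hφ'' hφ''nn r₀ hr₀ w hw u hupos hwu hwu0
end
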